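/- arXiv:2411.05563 — 6 statements merged into one kernel-verified Lean document; each statement's English description precedes it below -/
import Mathlib

section
/- Let G be a finite group and χ an irreducible character of G with associated representation ρ on V. For one-dimensional characters ξ₁, ξ₂ of G with ξ₁χ = χ and ξ₂χ = χ, choose intertwiners φ₁: V → V_{ξ₁} and φ₂: V → V_{ξ₂} (isomorphisms satisfying φᵢρ(g) = ξᵢ(g)ρ(g)φᵢ). Then the commutator φ₂φ₁φ₂⁻¹φ₁⁻¹ is a scalar, this scalar is a root of unity independent of the choices of φ₁ and φ₂, and the resulting pairing (ξ₁,ξ₂) ↦ scalar(φ₂φ₁φ₂⁻¹φ₁⁻¹) on the stabilizer of χ is bilinear (multiplicative in each variable) and anti-symmetric, with value 1 when ξ₁ = ξ₂. -/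
noncomputable section

/-- `φ : V → V_ξ` is an intertwiner: `φ (ρ g v) = ξ g • ρ g (φ v)`. -/
def Intertwines {G V : Type} [Group G] [AddCommGroup V] [Module ℂ V]
    (ρ : Representation ℂ G V) (ξ : G →* ℂ) (φ : V →ₗ[ℂ] V) : Prop :=
  ∀ g : G, φ ∘ₗ (ρ g) = ξ g • ((ρ g) ∘ₗ φ)

/-- `ξ` stabilizes the character `χ = tr ∘ ρ`:  `ξ·χ = χ`. -/
def StabilizesChar {G V : Type} [Group G] [AddCommGroup V] [Module ℂ V]
    (ρ : Representation ℂ G V) (ξ : G →* ℂ) : Prop :=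
  ∀ g : G, ξ g * LinearMap.trace ℂ V (ρ g) = LinearMap.trace ℂ V (ρ g)

/-!
Since `ξχ = χ`, the character inner product gives `dim Hom_G(V, V_ξ) = dim End_G(V) = 1`, and a
nonzero intertwiner is bijective because `V` is irreducible; by Schur's lemma any two intertwiners
for the same `ξ` are proportional. For intertwiners `φ₁, φ₂` both `φ₂φ₁` and `φ₁φ₂` intertwine `V`
with `V_{ξ₁ξ₂}`, so they differ by a scalar, which is unchanged when the `φᵢ` are rescaled.
Comparing `φ₂φ₃φ₁` with `φ₁φ₂φ₃`, and `φ₂φ₁` with itself through `φ₁φ₂`, gives multiplicativity in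
the second variable and anti-symmetry; multiplicativity and `ξ ^ |G| = 1` give the roots of unity.
-/

open CategoryTheory Function Representation

namespace Representation

section Twist

variable {k G V : Type*} [CommSemiring k] [Monoid G] [AddCommMonoid V] [Module k V]

/-- The representation `V_ξ`. -/
def twist (ρ : Representation k G V) (ξ : G →* k) : Representation k G V where
  toFun g := ξ g • ρ g
  map_one' := by simp
  map_mul' g h := by rw [map_mul, map_mul, smul_mul_smul_comm]

end Twist

section

variable {k G V W : Type*} [Field k] [AddCommGroup V] [Module k V] [AddCommGroup W] [Module k W]

lemma character_twist [Monoid G] [FiniteDimensional k V] (ρ : Representation k G V) (ξ : G →* k)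
    (g : G) : (ρ.twist ξ).character g = ξ g * ρ.character g :=
  map_smul (LinearMap.trace k V) (ξ g) (ρ g)

lemma nontrivial_of_isIrreducible [Monoid G] (ρ : Representation k G V) [ρ.IsIrreducible] :
    Nontrivial V :=
  IsSimpleModule.nontrivial (MonoidAlgebra k G) ρ.asModule

lemma IsIrreducible.exists_eq_smul_of_equiv [Monoid G] [IsAlgClosed k] [FiniteDimensional k V]
    {ρ : Representation k G V} {σ : Representation k G W} [ρ.IsIrreducible]
    (f : IntertwiningMap ρ σ) (e : Equiv ρ σ) : ∃ c : k, f = c • e.toIntertwiningMap := by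
  obtain ⟨c, hc⟩ := IsIrreducible.algebraMap_intertwiningMap_bijective_of_isAlgClosed.2
    (e.symm.toIntertwiningMap.comp f)
  refine ⟨c, IntertwiningMap.ext (LinearMap.ext fun v => ?_)⟩
  have := congrArg (fun f : IntertwiningMap ρ ρ => e (f v)) hc
  simpa using this.symm

lemma IsIrreducible.finrank_intertwiningMap_eq_one_of_character_eq [Group G] [Finite G]
    [CharZero k] [IsAlgClosed k] [FiniteDimensional k V]
    (ρ : Representation k G V) (σ : Representation k G W) [FiniteDimensional k W]
    [ρ.IsIrreducible] (h : σ.character = ρ.character) :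
    Module.finrank k (IntertwiningMap ρ σ) = 1 := by
  have := Fintype.ofFinite G
  have := invertibleOfNonzero (Nat.cast_ne_zero.2 Nat.card_pos.ne' : (Nat.card G : k) ≠ 0)
  have := card_inv_mul_sum_char_mul_char_eq_finrank ρ σ
  rw [h, card_inv_mul_sum_char_mul_char_eq_finrank, finrank_intertwiningMap_self] at this
  exact_mod_cast this.symm

end

section FDRep

universe u

variable {k G V : Type u} [Field k] [Monoid G] [AddCommGroup V] [Module k V] [FiniteDimensional k V]

def _root_.Subrepresentation.subtypeHom {ρ : Representation k G V} (W : Subrepresentation ρ) :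
    FDRep.of W.toRepresentation ⟶ FDRep.of ρ where
  hom := FGModuleCat.ofHom W.toSubmodule.subtype
  comm _ := rfl

lemma isIrreducible_of_simple (ρ : Representation k G V) [Simple (FDRep.of ρ)] :
    ρ.IsIrreducible := by
  have : Nontrivial (Subrepresentation ρ) := by
    refine ⟨⊥, ⊤, fun h => id_nonzero (FDRep.of ρ) (Action.hom_ext _ _ ?_)⟩
    have hV (v : V) : v = 0 := (h ▸ Submodule.mem_top (R := k) : v ∈ (⊥ : Subrepresentation ρ))
    ext v
    exact (hV _).trans (hV _).symm
  refine IsSimpleOrder.of_forall_eq_top fun W hW => ?_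
  have hinj : Injective W.subtypeHom.hom := Subtype.val_injective
  have : Mono W.subtypeHom := ConcreteCategory.mono_of_injective _ hinj
  have hne : W.subtypeHom ≠ 0 := by
    obtain ⟨v, hv, hv0⟩ := Submodule.exists_mem_ne_zero_of_ne_bot
      (fun h => hW (Subrepresentation.toSubmodule_injective h))
    intro h
    apply hv0
    change W.subtypeHom.hom ⟨v, hv⟩ = 0
    rw [h]
    rfl
  have : IsIso W.subtypeHom := isIso_of_mono_of_nonzero hne
  have hsurj := (ConcreteCategory.bijective_of_isIso ((Action.forget _ G).map W.subtypeHom)).2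
  refine Subrepresentation.toSubmodule_injective (Submodule.eq_top_iff'.2 fun v => ?_)
  obtain ⟨w, rfl⟩ := hsurj v
  exact w.2

end FDRep

end Representation

section Intertwiners

variable {G V : Type} [Group G] [AddCommGroup V] [Module ℂ V] {ρ : Representation ℂ G V}

lemma Intertwines.apply {ξ : G →* ℂ} {φ : V →ₗ[ℂ] V} (h : Intertwines ρ ξ φ) (g : G) (v : V) :
    φ (ρ g v) = ξ g • ρ g (φ v) :=
  LinearMap.congr_fun (h g) v

lemma Intertwines.comp {ξ₁ ξ₂ : G →* ℂ} {φ₁ φ₂ : V →ₗ[ℂ] V} (h₁ : Intertwines ρ ξ₁ φ₁)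
    (h₂ : Intertwines ρ ξ₂ φ₂) : Intertwines ρ (ξ₁ * ξ₂) (φ₂ ∘ₗ φ₁) := fun g => by
  ext v
  simp [h₁.apply, h₂.apply, smul_smul]

lemma intertwines_one_id (ρ : Representation ℂ G V) : Intertwines ρ 1 LinearMap.id := fun g => by
  simp

def Intertwines.toIntertwiningMap {ξ : G →* ℂ} {φ : V →ₗ[ℂ] V} (h : Intertwines ρ ξ φ) :
    IntertwiningMap ρ (ρ.twist ξ) :=
  ⟨φ, fun g => (h g).trans (LinearMap.smul_comp _ _ _).symm⟩

lemma intertwines_of_intertwiningMap {ξ : G →* ℂ} (f : IntertwiningMap ρ (ρ.twist ξ)) :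
    Intertwines ρ ξ f.toLinearMap :=
  fun g => (f.isIntertwining' g).trans (LinearMap.smul_comp _ _ _)

variable [FiniteDimensional ℂ V] [ρ.IsIrreducible]

lemma Intertwines.exists_eq_smul {ξ : G →* ℂ} {φ ψ : V →ₗ[ℂ] V} (hφ : Intertwines ρ ξ φ)
    (hψ : Intertwines ρ ξ ψ) (hψb : Bijective ψ) : ∃ c : ℂ, φ = c • ψ := by
  obtain ⟨c, hc⟩ := IsIrreducible.exists_eq_smul_of_equiv hφ.toIntertwiningMap
    (hψ.toIntertwiningMap.ofBijective hψb)
  exact ⟨c, congrArg IntertwiningMap.toLinearMap hc⟩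

lemma Intertwines.exists_comp_eq_smul_comp {ξ₁ ξ₂ : G →* ℂ} {φ₁ φ₂ : V →ₗ[ℂ] V}
    (h₁ : Intertwines ρ ξ₁ φ₁) (h₂ : Intertwines ρ ξ₂ φ₂) (hb₁ : Bijective φ₁)
    (hb₂ : Bijective φ₂) : ∃ c : ℂ, φ₂ ∘ₗ φ₁ = c • (φ₁ ∘ₗ φ₂) :=
  (h₁.comp h₂).exists_eq_smul (mul_comm ξ₁ ξ₂ ▸ h₂.comp h₁) (hb₁.comp hb₂)

end Intertwiners

section Stabilizer

variable {G V : Type} [Group G] [AddCommGroup V] [Module ℂ V]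

def charStabilizer (ρ : Representation ℂ G V) : Submonoid (G →* ℂ) where
  carrier := {ξ | StabilizesChar ρ ξ}
  one_mem' _ := one_mul _
  mul_mem' {ξ₁ ξ₂} h₁ h₂ g := by rw [MonoidHom.mul_apply, mul_assoc, h₂ g, h₁ g]

variable {ρ : Representation ℂ G V} {ξ : G →* ℂ} [FiniteDimensional ℂ V]

lemma StabilizesChar.character_twist (h : StabilizesChar ρ ξ) :
    (ρ.twist ξ).character = ρ.character :=
  funext fun g => (Representation.character_twist ρ ξ g).trans (h g)

lemma StabilizesChar.exists_intertwines_bijective [Finite G] [ρ.IsIrreducible]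
    (h : StabilizesChar ρ ξ) : ∃ φ : V →ₗ[ℂ] V, Intertwines ρ ξ φ ∧ Bijective φ := by
  have hrank := IsIrreducible.finrank_intertwiningMap_eq_one_of_character_eq ρ (ρ.twist ξ)
    h.character_twist
  have := Module.nontrivial_of_finrank_pos (hrank ▸ one_pos)
  obtain ⟨f, hf⟩ := exists_ne (0 : IntertwiningMap ρ (ρ.twist ξ))
  have hinj := (IsIrreducible.injective_or_eq_zero f).resolve_right hf
  exact ⟨f.toLinearMap, intertwines_of_intertwiningMap f, hinj,
    LinearMap.injective_iff_surjective.1 hinj⟩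

end Stabilizer

section Pairing

variable {G V : Type} [Group G] [AddCommGroup V] [Module ℂ V]

/-- Outside the stabilizer of `χ` this is a junk value chosen by `Classical.epsilon`. -/
def commutatorPairing (ρ : Representation ℂ G V) (ξ₁ ξ₂ : G →* ℂ) : ℂ :=
  Classical.epsilon fun c : ℂ => ∀ φ₁ φ₂ : V →ₗ[ℂ] V, Intertwines ρ ξ₁ φ₁ →
    Intertwines ρ ξ₂ φ₂ → Bijective φ₁ → Bijective φ₂ → φ₂ ∘ₗ φ₁ = c • (φ₁ ∘ₗ φ₂)

variable {ρ : Representation ℂ G V} [Finite G] [FiniteDimensional ℂ V] [ρ.IsIrreducible]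
  {ξ₁ ξ₂ ξ₃ : G →* ℂ} {φ₁ φ₂ : V →ₗ[ℂ] V}

lemma exists_forall_comp_eq_smul_comp (h₁ : StabilizesChar ρ ξ₁) (h₂ : StabilizesChar ρ ξ₂) :
    ∃ c : ℂ, ∀ φ₁ φ₂ : V →ₗ[ℂ] V, Intertwines ρ ξ₁ φ₁ → Intertwines ρ ξ₂ φ₂ →
      Bijective φ₁ → Bijective φ₂ → φ₂ ∘ₗ φ₁ = c • (φ₁ ∘ₗ φ₂) := by
  obtain ⟨ψ₁, i₁, b₁⟩ := h₁.exists_intertwines_bijective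
  obtain ⟨ψ₂, i₂, b₂⟩ := h₂.exists_intertwines_bijective
  obtain ⟨c, hc⟩ := i₁.exists_comp_eq_smul_comp i₂ b₁ b₂
  refine ⟨c, fun φ₁ φ₂ j₁ j₂ _ _ => ?_⟩
  obtain ⟨a₁, rfl⟩ := j₁.exists_eq_smul i₁ b₁
  obtain ⟨a₂, rfl⟩ := j₂.exists_eq_smul i₂ b₂
  simp only [LinearMap.smul_comp, LinearMap.comp_smul, hc, smul_smul]
  congr 1
  ring

lemma comp_eq_commutatorPairing_smul (h₁ : StabilizesChar ρ ξ₁) (h₂ : StabilizesChar ρ ξ₂)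
    (i₁ : Intertwines ρ ξ₁ φ₁) (i₂ : Intertwines ρ ξ₂ φ₂) (b₁ : Bijective φ₁)
    (b₂ : Bijective φ₂) : φ₂ ∘ₗ φ₁ = commutatorPairing ρ ξ₁ ξ₂ • (φ₁ ∘ₗ φ₂) :=
  Classical.epsilon_spec (exists_forall_comp_eq_smul_comp h₁ h₂) φ₁ φ₂ i₁ i₂ b₁ b₂

lemma commutatorPairing_eq_of_comp_eq_smul {c : ℂ} (h₁ : StabilizesChar ρ ξ₁)
    (h₂ : StabilizesChar ρ ξ₂) (i₁ : Intertwines ρ ξ₁ φ₁) (i₂ : Intertwines ρ ξ₂ φ₂)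
    (b₁ : Bijective φ₁) (b₂ : Bijective φ₂) (h : φ₂ ∘ₗ φ₁ = c • (φ₁ ∘ₗ φ₂)) :
    commutatorPairing ρ ξ₁ ξ₂ = c :=
  have := nontrivial_of_isIrreducible ρ
  smul_left_injective ℂ (LinearMap.ne_zero_of_injective (b₁.comp b₂).1)
    ((comp_eq_commutatorPairing_smul h₁ h₂ i₁ i₂ b₁ b₂).symm.trans h)

lemma commutatorPairing_self (h : StabilizesChar ρ ξ₁) : commutatorPairing ρ ξ₁ ξ₁ = 1 := by
  obtain ⟨ψ, i, b⟩ := h.exists_intertwines_bijective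
  exact commutatorPairing_eq_of_comp_eq_smul h h i i b b (one_smul ℂ _).symm

lemma commutatorPairing_one_right (h : StabilizesChar ρ ξ₁) : commutatorPairing ρ ξ₁ 1 = 1 := by
  obtain ⟨ψ, i, b⟩ := h.exists_intertwines_bijective
  refine commutatorPairing_eq_of_comp_eq_smul h (charStabilizer ρ).one_mem i
    (intertwines_one_id ρ) b bijective_id ?_
  rw [one_smul, LinearMap.id_comp, LinearMap.comp_id]

lemma commutatorPairing_mul_right (h₁ : StabilizesChar ρ ξ₁) (h₂ : StabilizesChar ρ ξ₂)
    (h₃ : StabilizesChar ρ ξ₃) :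
    commutatorPairing ρ ξ₁ (ξ₂ * ξ₃) = commutatorPairing ρ ξ₁ ξ₂ * commutatorPairing ρ ξ₁ ξ₃ := by
  obtain ⟨ψ₁, i₁, b₁⟩ := h₁.exists_intertwines_bijective
  obtain ⟨ψ₂, i₂, b₂⟩ := h₂.exists_intertwines_bijective
  obtain ⟨ψ₃, i₃, b₃⟩ := h₃.exists_intertwines_bijective
  have i₂₃ : Intertwines ρ (ξ₂ * ξ₃) (ψ₂ ∘ₗ ψ₃) := mul_comm ξ₃ ξ₂ ▸ i₃.comp i₂
  refine commutatorPairing_eq_of_comp_eq_smul h₁ ((charStabilizer ρ).mul_mem h₂ h₃) i₁ i₂₃ b₁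
    (b₂.comp b₃) ?_
  calc (ψ₂ ∘ₗ ψ₃) ∘ₗ ψ₁ = ψ₂ ∘ₗ ψ₃ ∘ₗ ψ₁ := LinearMap.comp_assoc _ _ _
    _ = commutatorPairing ρ ξ₁ ξ₃ • ((ψ₂ ∘ₗ ψ₁) ∘ₗ ψ₃) := by
      rw [comp_eq_commutatorPairing_smul h₁ h₃ i₁ i₃ b₁ b₃, LinearMap.comp_smul,
        LinearMap.comp_assoc]
    _ = (commutatorPairing ρ ξ₁ ξ₂ * commutatorPairing ρ ξ₁ ξ₃) • (ψ₁ ∘ₗ ψ₂ ∘ₗ ψ₃) := by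
      rw [comp_eq_commutatorPairing_smul h₁ h₂ i₁ i₂ b₁ b₂, LinearMap.smul_comp, smul_smul,
        mul_comm, LinearMap.comp_assoc]

lemma commutatorPairing_mul_commutatorPairing_swap (h₁ : StabilizesChar ρ ξ₁)
    (h₂ : StabilizesChar ρ ξ₂) : commutatorPairing ρ ξ₁ ξ₂ * commutatorPairing ρ ξ₂ ξ₁ = 1 := by
  obtain ⟨ψ₁, i₁, b₁⟩ := h₁.exists_intertwines_bijective
  obtain ⟨ψ₂, i₂, b₂⟩ := h₂.exists_intertwines_bijective
  have := nontrivial_of_isIrreducible ρ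
  have hne : ψ₂ ∘ₗ ψ₁ ≠ 0 := LinearMap.ne_zero_of_injective (b₂.comp b₁).1
  refine smul_left_injective ℂ hne ?_
  dsimp only
  rw [mul_smul, ← comp_eq_commutatorPairing_smul h₂ h₁ i₂ i₁ b₂ b₁,
    ← comp_eq_commutatorPairing_smul h₁ h₂ i₁ i₂ b₁ b₂, one_smul]

def commutatorPairingHom (h₁ : StabilizesChar ρ ξ₁) : charStabilizer ρ →* ℂ where
  toFun ξ₂ := commutatorPairing ρ ξ₁ ξ₂
  map_one' := commutatorPairing_one_right h₁
  map_mul' ξ₂ ξ₃ := commutatorPairing_mul_right h₁ ξ₂.2 ξ₃.2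

lemma commutatorPairing_pow_card (h₁ : StabilizesChar ρ ξ₁) (h₂ : StabilizesChar ρ ξ₂) :
    commutatorPairing ρ ξ₁ ξ₂ ^ Nat.card G = 1 := by
  have hpow : (⟨ξ₂, h₂⟩ : charStabilizer ρ) ^ Nat.card G = 1 :=
    Subtype.ext (MonoidHom.ext fun g => by simp [← map_pow, pow_card_eq_one'])
  calc commutatorPairing ρ ξ₁ ξ₂ ^ Nat.card G
      = commutatorPairingHom h₁ (⟨ξ₂, h₂⟩ ^ Nat.card G) :=
        (map_pow (commutatorPairingHom h₁) ⟨ξ₂, h₂⟩ _).symm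
    _ = 1 := by rw [hpow, map_one]

end Pairing

/-- For an irreducible representation `ρ` of a finite group `G` and one-dimensional
characters `ξ₁, ξ₂` stabilizing `χ = tr ρ`, the commutator `φ₂φ₁φ₂⁻¹φ₁⁻¹` of any choice of
bijective intertwiners `φᵢ : V → V_{ξᵢ}` is a scalar `B ξ₁ ξ₂` independent of the choices
(expressed as `φ₂ ∘ φ₁ = B ξ₁ ξ₂ • (φ₁ ∘ φ₂)`), this scalar is a root of unity, and the
pairing `B` on the stabilizer of `χ` is bilinear and anti-symmetric with `B ξ ξ = 1`. -/
theorem commutator_pairing_of_intertwiners {G V : Type} [Group G] [Fintype G]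
    [AddCommGroup V] [Module ℂ V] [FiniteDimensional ℂ V]
    (ρ : Representation ℂ G V) (hirr : CategoryTheory.Simple (FDRep.of ρ)) :
    ∃ B : (G →* ℂ) → (G →* ℂ) → ℂ,
      (∀ (ξ₁ ξ₂ : G →* ℂ) (φ₁ φ₂ : V →ₗ[ℂ] V),
          StabilizesChar ρ ξ₁ → StabilizesChar ρ ξ₂ →
          Intertwines ρ ξ₁ φ₁ → Intertwines ρ ξ₂ φ₂ →
          Function.Bijective φ₁ → Function.Bijective φ₂ →
          φ₂ ∘ₗ φ₁ = B ξ₁ ξ₂ • (φ₁ ∘ₗ φ₂)) ∧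
      (∀ ξ₁ ξ₂ : G →* ℂ, StabilizesChar ρ ξ₁ → StabilizesChar ρ ξ₂ →
          B ξ₁ ξ₂ ^ Fintype.card G = 1) ∧
      (∀ ξ : G →* ℂ, StabilizesChar ρ ξ → B ξ ξ = 1) ∧
      (∀ ξ₁ ξ₂ : G →* ℂ, StabilizesChar ρ ξ₁ → StabilizesChar ρ ξ₂ →
          B ξ₁ ξ₂ * B ξ₂ ξ₁ = 1) ∧
      (∀ ξ₁ ξ₂ ξ₃ : G →* ℂ, StabilizesChar ρ ξ₁ → StabilizesChar ρ ξ₂ →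
          StabilizesChar ρ ξ₃ → B ξ₁ (ξ₂ * ξ₃) = B ξ₁ ξ₂ * B ξ₁ ξ₃) := by
  have := isIrreducible_of_simple ρ
  refine ⟨commutatorPairing ρ, fun _ _ _ _ h₁ h₂ => comp_eq_commutatorPairing_smul h₁ h₂,
    fun _ _ h₁ h₂ => ?_, fun _ => commutatorPairing_self,
    fun _ _ => commutatorPairing_mul_commutatorPairing_swap,
    fun _ _ _ => commutatorPairing_mul_right⟩
  rw [← Nat.card_eq_fintype_card]
  exact commutatorPairing_pow_card h₁ h₂
end
end

section
/- Let G be a finite group, H ⊴ G with K = G/H abelian, and λ the class function on G defined by integrating a word against an irreducible character: for an irreducible character χ of G, any word ω in m variables, any tuple a ∈ K^m and any z ∈ G, one has (1/|G|^m)·Σ_{x ∈ G_a} χ(ω(x)·z) = (1/χ(1)) · [(1/|G|^m)·Σ_{x∈G_a} χ(ω(x))] · χ(z), where G_a = π⁻¹(a₁) × ⋯ × π⁻¹(a_m). -/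
/-
Let `V` afford `χ` and let `G_a` be the set of tuples `x` with `π (x i) = a i`. As `K` is abelian,
conjugation fixes every fibre of `π`, so `G_a` is stable under simultaneous conjugation, and
`ω(g x g⁻¹) = g ω(x) g⁻¹`. Hence `T = Σ_{x ∈ G_a} ρ(ω(x))` commutes with every `ρ(g)`, and by Schur's
lemma `T = c • 1` with `c χ(1) = tr T`. Taking traces of `T` and of `T ρ(z)` gives the identity.
-/

open scoped Classical

noncomputable section

def IsIrredChar (G : Type) [Group G] (χ : G → ℂ) : Prop :=
  ∃ V : FDRep ℂ G, CategoryTheory.Simple V ∧ ∀ g : G, χ g = V.character g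

open CategoryTheory

theorem FreeGroup.lift_conj {α G : Type*} [Group G] (g : G) (x : α → G) (w : FreeGroup α) :
    lift (fun i => g * x i * g⁻¹) w = g * lift x w * g⁻¹ :=
  (lift_unique ((MulAut.conj g).toMonoidHom.comp (lift x)) fun i => by simp).symm

theorem QuotientGroup.mk_conj_eq_of_forall_commutator_mem {G : Type*} [Group G] {H : Subgroup G}
    (hH : ∀ a b : G, a * b * a⁻¹ * b⁻¹ ∈ H) (g x : G) : ((g * x * g⁻¹ : G) : G ⧸ H) = x := by
  rw [QuotientGroup.eq]
  convert hH g x⁻¹ using 1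
  group

namespace FDRep

variable {k G : Type} [Field k] [Group G] (V : FDRep k G)

theorem character_one_ne_zero [CharZero k] [Simple V] : V.character 1 ≠ 0 := by
  rw [char_one, Nat.cast_ne_zero]
  intro h
  have : Subsingleton V := Module.finrank_zero_iff.mp h
  exact id_nonzero V (by ext v; exact Subsingleton.elim _ _)

theorem exists_eq_smul_id_of_commute [IsAlgClosed k] [Simple V] (T : V →ₗ[k] V)
    (hT : ∀ g, V.ρ g * T = T * V.ρ g) : ∃ c : k, T = c • LinearMap.id := by
  obtain ⟨c, hc⟩ := endomorphism_simple_eq_smul_id k (X := V)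
    (Action.Hom.mk (FGModuleCat.ofHom T) fun g => FGModuleCat.hom_ext (hT g).symm)
  refine ⟨c, ?_⟩
  have h := congrArg Action.Hom.hom hc.symm
  rw [Action.smul_hom, Action.id_hom] at h
  exact congrArg (fun φ => φ.hom.hom) h

theorem trace_mul_ρ_mul_character_one [IsAlgClosed k] [Simple V] (T : V →ₗ[k] V)
    (hT : ∀ g, V.ρ g * T = T * V.ρ g) (z : G) :
    LinearMap.trace k V (T * V.ρ z) * V.character 1 = LinearMap.trace k V T * V.character z := by
  obtain ⟨c, rfl⟩ := V.exists_eq_smul_id_of_commute T hT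
  rw [char_one, smul_mul_assoc, ← Module.End.one_eq_id, one_mul]
  simp only [map_smul, smul_eq_mul, LinearMap.trace_one, character]
  ring

theorem ρ_mul_sum_ρ_lift {ι : Type} (F : Finset (ι → G))
    (hF : ∀ (g : G) x, x ∈ F → (fun i => g * x i * g⁻¹) ∈ F) (ω : FreeGroup ι) (g : G) :
    V.ρ g * ∑ x ∈ F, V.ρ (FreeGroup.lift x ω) = (∑ x ∈ F, V.ρ (FreeGroup.lift x ω)) * V.ρ g := by
  have hconj : ∑ x ∈ F, V.ρ (FreeGroup.lift (fun i => g * x i * g⁻¹) ω)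
      = ∑ x ∈ F, V.ρ (FreeGroup.lift x ω) :=
    Finset.sum_nbij' (fun x i => g * x i * g⁻¹) (fun x i => g⁻¹ * x i * g)
      (fun x hx => hF g x hx) (fun x hx => by simpa using hF g⁻¹ x hx)
      (fun x _ => by ext; group) (fun x _ => by ext; group) (fun _ _ => rfl)
  rw [Finset.mul_sum, ← hconj, Finset.sum_mul]
  refine Finset.sum_congr rfl fun x _ => ?_
  rw [FreeGroup.lift_conj, ← map_mul, ← map_mul]
  group

end FDRep

theorem word_integral_splits_general {G : Type} [Group G] [Fintype G]
    (H : Subgroup G)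
    (hab : ∀ a b : G, a * b * a⁻¹ * b⁻¹ ∈ H)
    (χ : G → ℂ) (hχ : IsIrredChar G χ)
    (m : ℕ) (ω : FreeGroup (Fin m)) (a : Fin m → G ⧸ H) (z : G) :
    (1 / (Fintype.card G : ℂ) ^ m) *
        ∑ x ∈ Finset.univ.filter (fun x : Fin m → G => ∀ i, ((x i : G ⧸ H) = a i)),
          χ ((FreeGroup.lift x) ω * z) =
      (1 / χ 1) *
        ((1 / (Fintype.card G : ℂ) ^ m) *
          ∑ x ∈ Finset.univ.filter (fun x : Fin m → G => ∀ i, ((x i : G ⧸ H) = a i)),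
            χ ((FreeGroup.lift x) ω)) * χ z := by
  obtain ⟨V, hV, hχV⟩ := hχ
  obtain rfl : χ = V.character := funext hχV
  set F := Finset.univ.filter (fun x : Fin m → G => ∀ i, ((x i : G ⧸ H) = a i))
  have hF : ∀ (g : G) x, x ∈ F → (fun i => g * x i * g⁻¹) ∈ F := by
    intro g x hx
    simpa [F, QuotientGroup.mk_conj_eq_of_forall_commutator_mem hab] using hx
  set T := ∑ x ∈ F, V.ρ (FreeGroup.lift x ω)
  have hsum_z :
      ∑ x ∈ F, V.character (FreeGroup.lift x ω * z) = LinearMap.trace ℂ V (T * V.ρ z) := by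
    simp only [T, Finset.sum_mul, map_sum, ← map_mul]; rfl
  have hsum : ∑ x ∈ F, V.character (FreeGroup.lift x ω) = LinearMap.trace ℂ V T := by
    simp only [T, map_sum]; rfl
  have key := V.trace_mul_ρ_mul_character_one T (V.ρ_mul_sum_ρ_lift F hF ω) z
  have hχ1 := V.character_one_ne_zero
  rw [hsum_z, hsum]
  field_simp
  linear_combination key

/-- For `H ⊴ G` with abelian quotient `K`, an irreducible character `χ` of `G`, a word `ω`
in `m` variables, a tuple `a ∈ K^m` and `z ∈ G`:
`(1/|G|^m) Σ_{x ∈ G_a} χ(ω(x)z) = (1/χ(1)) [(1/|G|^m) Σ_{x ∈ G_a} χ(ω(x))] χ(z)`,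
where `G_a = π⁻¹(a₁) × ⋯ × π⁻¹(a_m)`. -/
theorem word_integral_splits {G : Type} [Group G] [Fintype G]
    (H : Subgroup G) [H.Normal]
    (hab : ∀ a b : G, a * b * a⁻¹ * b⁻¹ ∈ H)
    (χ : G → ℂ) (hχ : IsIrredChar G χ)
    (m : ℕ) (ω : FreeGroup (Fin m)) (a : Fin m → G ⧸ H) (z : G) :
    (1 / (Fintype.card G : ℂ) ^ m) *
        ∑ x ∈ Finset.univ.filter (fun x : Fin m → G => ∀ i, ((x i : G ⧸ H) = a i)),
          χ ((FreeGroup.lift x) ω * z) =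
      (1 / χ 1) *
        ((1 / (Fintype.card G : ℂ) ^ m) *
          ∑ x ∈ Finset.univ.filter (fun x : Fin m → G => ∀ i, ((x i : G ⧸ H) = a i)),
            χ ((FreeGroup.lift x) ω)) * χ z :=
  word_integral_splits_general H hab χ hχ m ω a z
end
end

section
/- Let 𝓘 be a finite set, μ₁,…,μ_n nonzero elements of a finite cyclic group Ĉ (identified with Irr(𝔽_q^×) values) such that no nonempty subproduct of the μ's equals 1, and to each ι ∈ 𝓘 associate μ_ι, a product of some of the μᵢ, such that the μ_ι taken over all ι use each μᵢ exactly once. Then Σ_W μ(1,W) = (−1)^{|𝓘|−1}(|𝓘|−1)!, where the sum runs over all subgroups W of the symmetric group S(𝓘) acting transitively on 𝓘 and μ is the Möbius function of the lattice of subgroups of S(𝓘). -/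
/-!
Sort subgroups `K ≤ S(ι)` by their orbit partition and permutations `τ` by their cycle partition
(the orbit partition of `⟨τ⟩`). A subgroup has orbits finer than a partition `π` iff it lies in
the Young subgroup `S_π`, and a permutation has cycles finer than `π` iff it lies in `S_π`. So
over everything finer than `π`, both the Möbius weights of subgroups and the signs of
permutations sum to `[π = ⊥]`: the former by the Möbius recursion, the latter because `S_π`
contains a transposition unless `π = ⊥`. Functions on the finite partition lattice are determined
by their sums over lower sets, so the transitive subgroups (orbit partition `⊤`) carry the same
total weight as the full cycles: `(n - 1)!` permutations of sign `(-1) ^ (n - 1)`.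
-/

open Equiv Finset
open scoped Nat

section MoebiusUniqueness

variable {α M : Type*} [PartialOrder α] [Fintype α]

open scoped Classical in
theorem eq_of_forall_sum_filter_le_eq [AddCommGroup M] {f g : α → M}
    (h : ∀ a, ∑ b with b ≤ a, f b = ∑ b with b ≤ a, g b) : f = g := by
  funext a
  induction a using WellFoundedLT.induction with
  | _ a ih =>
    have hsplit : ({b | b ≤ a} : Finset α) = cons a {b | b < a} (by simp) := by
      ext b
      simp [le_iff_lt_or_eq, or_comm]
    have hbelow : ∑ b with b < a, f b = ∑ b with b < a, g b :=
      sum_congr rfl fun b hb => ih b (mem_filter.1 hb).2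
    simpa only [hsplit, sum_cons, hbelow, add_left_inj] using h a

open scoped Classical in
theorem sum_filter_le_sum_fiber [AddCommMonoid M] {X : Type*} [Fintype X] (p : X → α)
    (v : X → M) (a : α) :
    ∑ b with b ≤ a, ∑ x with p x = b, v x = ∑ x with p x ≤ a, v x := by
  rw [← sum_fiberwise_of_maps_to (s := {x | p x ≤ a}) (t := {b | b ≤ a}) (g := p) (by simp)]
  refine sum_congr rfl fun b hb => sum_congr ?_ fun _ _ => rfl
  ext x
  simp only [mem_filter_univ] at hb
  simp +contextual [hb]

open scoped Classical in
theorem sum_fiber_eq_of_forall_sum_le_eq [AddCommGroup M] {X Y : Type*} [Fintype X] [Fintype Y]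
    (p : X → α) (q : Y → α) (v : X → M) (w : Y → M)
    (h : ∀ a, ∑ x with p x ≤ a, v x = ∑ y with q y ≤ a, w y) (a : α) :
    ∑ x with p x = a, v x = ∑ y with q y = a, w y :=
  congrFun (eq_of_forall_sum_filter_le_eq (f := fun b => ∑ x with p x = b, v x)
    (g := fun b => ∑ y with q y = b, w y) fun a => by
      rw [sum_filter_le_sum_fiber, sum_filter_le_sum_fiber, h]) a

end MoebiusUniqueness

instance Setoid.instFinite {ι : Type*} [Finite ι] : Finite (Setoid ι) :=
  Finite.of_injective (fun s : Setoid ι => ⇑s) fun _ _ h =>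
    Setoid.ext fun x y => iff_of_eq (congrFun₂ h x y)

namespace Equiv.Perm

variable {ι : Type*}

section YoungSubgroup

def youngSubgroup (π : Setoid ι) : Subgroup (Perm ι) where
  carrier := {σ | ∀ x, π (σ x) x}
  one_mem' := π.refl
  mul_mem' ha hb x := π.trans (ha _) (hb x)
  inv_mem' {σ} hσ x := π.symm (by simpa using hσ (σ⁻¹ x))

@[simp] theorem mem_youngSubgroup {π : Setoid ι} {σ : Perm ι} :
    σ ∈ youngSubgroup π ↔ ∀ x, π (σ x) x := Iff.rfl

theorem orbitRel_apply_iff {K : Subgroup (Perm ι)} {x y : ι} :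
    MulAction.orbitRel K ι x y ↔ ∃ σ ∈ K, σ y = x := by
  simp [MulAction.orbitRel_apply, MulAction.mem_orbit_iff]

theorem le_youngSubgroup_iff {K : Subgroup (Perm ι)} {π : Setoid ι} :
    K ≤ youngSubgroup π ↔ MulAction.orbitRel K ι ≤ π := by
  simp only [SetLike.le_def, mem_youngSubgroup, Setoid.le_def, orbitRel_apply_iff]
  constructor
  · rintro h x _ ⟨σ, hσ, rfl⟩
    exact h hσ _
  · exact fun h σ hσ x => h ⟨σ, hσ, rfl⟩

theorem orbitRel_eq_top_iff {K : Subgroup (Perm ι)} :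
    MulAction.orbitRel K ι = ⊤ ↔ ∀ x y, ∃ σ ∈ K, σ x = y := by
  rw [Setoid.eq_top_iff, forall_comm]
  simp only [orbitRel_apply_iff]

theorem orbitRel_zpowers_eq_top_iff {τ : Perm ι} :
    MulAction.orbitRel (Subgroup.zpowers τ) ι = ⊤ ↔ ∀ x y, τ.SameCycle x y := by
  simp [orbitRel_eq_top_iff, Subgroup.mem_zpowers_iff, SameCycle]

theorem youngSubgroup_bot : youngSubgroup (⊥ : Setoid ι) = ⊥ :=
  (Subgroup.eq_bot_iff_forall _).2 fun _ hσ => Equiv.ext hσ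

variable [DecidableEq ι]

theorem swap_mem_youngSubgroup {π : Setoid ι} {x y : ι} (h : π x y) :
    swap x y ∈ youngSubgroup π := by
  intro z
  rcases eq_or_ne z x with rfl | hzx
  · simpa using π.symm h
  rcases eq_or_ne z y with rfl | hzy
  · simpa using h
  · simp [swap_apply_of_ne_of_ne hzx hzy]

theorem exists_swap_mem_youngSubgroup {π : Setoid ι} (hπ : π ≠ ⊥) :
    ∃ x y, x ≠ y ∧ swap x y ∈ youngSubgroup π := by
  obtain ⟨x, y, hxy, h⟩ : ∃ x y, x ≠ y ∧ π x y := by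
    contrapose! hπ
    exact Setoid.ext fun x y => ⟨fun h => by_contra fun hxy => hπ x y hxy h, fun h => h ▸ π.refl x⟩
  exact ⟨x, y, hxy, swap_mem_youngSubgroup h⟩

theorem youngSubgroup_eq_bot_iff {π : Setoid ι} : youngSubgroup π = ⊥ ↔ π = ⊥ := by
  refine ⟨fun h => by_contra fun hπ => ?_, fun h => h ▸ youngSubgroup_bot⟩
  obtain ⟨x, y, hxy, hswap⟩ := exists_swap_mem_youngSubgroup hπ
  rw [h, Subgroup.mem_bot, swap_eq_one_iff] at hswap
  exact hxy hswap

variable [Fintype ι]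

theorem sum_sign_eq_zero_of_swap_mem {H : Subgroup (Perm ι)} [DecidablePred (· ∈ H)]
    {x y : ι} (hxy : x ≠ y) (h : swap x y ∈ H) : ∑ τ with τ ∈ H, (sign τ : ℤ) = 0 := by
  rw [sum_subtype _ (fun _ => mem_filter_univ _)]
  refine sum_hom_units_eq_zero ((Units.coeHom ℤ).comp (sign.comp H.subtype)) fun h1 => ?_
  have := DFunLike.congr_fun h1 ⟨_, h⟩
  simp [sign_swap hxy] at this

open scoped Classical in
theorem sum_sign_youngSubgroup (π : Setoid ι) :
    ∑ τ with τ ∈ youngSubgroup π, (sign τ : ℤ) = if π = ⊥ then 1 else 0 := by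
  split_ifs with hπ
  · simp [hπ, youngSubgroup_bot, Subgroup.mem_bot, filter_eq']
  · obtain ⟨x, y, hxy, hswap⟩ := exists_swap_mem_youngSubgroup hπ
    exact sum_sign_eq_zero_of_swap_mem hxy hswap

end YoungSubgroup

section FullCycles

variable [Fintype ι] [DecidableEq ι]

theorem isCycle_and_support_eq_univ_of_forall_sameCycle (hn : 1 < Fintype.card ι)
    {τ : Perm ι} (h : ∀ x y, τ.SameCycle x y) : τ.IsCycle ∧ τ.support = univ := by
  have hmoved : ∀ x, τ x ≠ x := by
    intro x hx
    obtain ⟨y, hy⟩ := Fintype.exists_ne_of_one_lt_card hn x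
    exact hy ((h x y).eq_of_left hx).symm
  obtain ⟨x⟩ := Fintype.card_pos_iff.1 (zero_lt_one.trans hn)
  exact ⟨⟨x, hmoved x, fun y _ => h x y⟩, eq_univ_of_forall fun y => mem_support.2 (hmoved y)⟩

theorem cycleType_eq_singleton_card_iff (hn : 1 < Fintype.card ι) {τ : Perm ι} :
    τ.cycleType = {Fintype.card ι} ↔ ∀ x y, τ.SameCycle x y := by
  constructor
  · intro h x y
    have hcycle : τ.IsCycle := card_cycleType_eq_one.1 (by simp [h])
    have hsupport : τ.support = univ := by
      apply eq_univ_of_card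
      simpa [h] using (sum_cycleType τ).symm
    exact hcycle.sameCycle (mem_support.1 (hsupport ▸ mem_univ x))
      (mem_support.1 (hsupport ▸ mem_univ y))
  · intro h
    obtain ⟨hcycle, hsupport⟩ := isCycle_and_support_eq_univ_of_forall_sameCycle hn h
    rw [hcycle.cycleType, hsupport, card_univ]

theorem card_filter_forall_sameCycle :
    #{τ : Perm ι | ∀ x y, τ.SameCycle x y} = (Fintype.card ι - 1)! := by
  rcases le_or_gt (Fintype.card ι) 1 with hn | hn
  · have : Subsingleton ι := Fintype.card_le_one_iff_subsingleton.1 hn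
    rw [filter_true_of_mem fun τ _ x y => Subsingleton.elim x y ▸ SameCycle.refl τ x,
      card_univ, Fintype.card_perm]
    interval_cases Fintype.card ι <;> rfl
  · simp_rw [← cycleType_eq_singleton_card_iff hn]
    rw [card_of_cycleType_singleton hn le_rfl, Nat.choose_self, mul_one]

theorem sign_of_forall_sameCycle {τ : Perm ι} (h : ∀ x y, τ.SameCycle x y) :
    sign τ = (-1) ^ (Fintype.card ι - 1) := by
  rcases le_or_gt (Fintype.card ι) 1 with hn | hn
  · have : Subsingleton ι := Fintype.card_le_one_iff_subsingleton.1 hn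
    rw [Subsingleton.elim τ 1, map_one, Nat.sub_eq_zero_of_le hn, pow_zero]
  · obtain ⟨hcycle, hsupport⟩ := isCycle_and_support_eq_univ_of_forall_sameCycle hn h
    rw [hcycle.sign, hsupport, card_univ, ← Nat.sub_add_cancel hn.le, pow_succ]
    simp

end FullCycles

end Equiv.Perm

theorem crapo_transitive_subgroups_general {ι : Type} [Fintype ι]
    (μ : Subgroup (Equiv.Perm ι) → ℤ)
    (hbot : μ ⊥ = 1)
    (hrec : ∀ W : Subgroup (Equiv.Perm ι), W ≠ ⊥ →
      ∑ᶠ K ∈ {K : Subgroup (Equiv.Perm ι) | K ≤ W}, μ K = 0) :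
    ∑ᶠ W ∈ {W : Subgroup (Equiv.Perm ι) | ∀ x y : ι, ∃ σ ∈ W, σ x = y}, μ W =
      (-1) ^ (Fintype.card ι - 1) * (Nat.factorial (Fintype.card ι - 1) : ℤ) := by
  classical
  have := Fintype.ofFinite (Setoid ι)
  have hμ (π : Setoid ι) : ∑ K with MulAction.orbitRel (↥(K : Subgroup (Perm ι))) ι ≤ π, μ K =
      if π = ⊥ then 1 else 0 := by
    simp_rw [← Perm.le_youngSubgroup_iff]
    split_ifs with hπ
    · simp [hπ, Perm.youngSubgroup_bot, sum_filter, hbot]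
    · have := hrec _ (Perm.youngSubgroup_eq_bot_iff.not.2 hπ)
      rwa [finsum_mem_eq_toFinset_sum, Set.toFinset_ofPred] at this
  have hsign (π : Setoid ι) :
      ∑ τ : Perm ι with MulAction.orbitRel (Subgroup.zpowers τ) ι ≤ π, (Perm.sign τ : ℤ) =
        if π = ⊥ then 1 else 0 := by
    simp_rw [← Perm.le_youngSubgroup_iff, Subgroup.zpowers_le]
    exact Perm.sum_sign_youngSubgroup π
  have key := sum_fiber_eq_of_forall_sum_le_eq _ _ _ _ (fun π => (hμ π).trans (hsign π).symm) ⊤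
  simp only [Perm.orbitRel_zpowers_eq_top_iff] at key
  simp only [Perm.orbitRel_eq_top_iff] at key
  rw [finsum_mem_eq_toFinset_sum, Set.toFinset_ofPred, key,
    sum_congr rfl fun τ hτ => congrArg _ (Perm.sign_of_forall_sameCycle (mem_filter.1 hτ).2),
    sum_const, Perm.card_filter_forall_sameCycle]
  simp [mul_comm]

/-- Crapo's closure theorem for the subgroup lattice of a symmetric group: for the Möbius
function `μ` of the lattice of subgroups of `S(𝓘)` (characterized by `μ(⊥) = 1` and
`Σ_{K ≤ W} μ(K) = 0` for `W ≠ ⊥`), the sum of `μ(⊥, W)` over all transitive subgroups `W`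
equals `(−1)^{|𝓘|−1}(|𝓘|−1)!`. -/
theorem crapo_transitive_subgroups {ι : Type} [Fintype ι] [DecidableEq ι] [Nonempty ι]
    (μ : Subgroup (Equiv.Perm ι) → ℤ)
    (hbot : μ ⊥ = 1)
    (hrec : ∀ W : Subgroup (Equiv.Perm ι), W ≠ ⊥ →
      ∑ᶠ K ∈ {K : Subgroup (Equiv.Perm ι) | K ≤ W}, μ K = 0) :
    ∑ᶠ W ∈ {W : Subgroup (Equiv.Perm ι) | ∀ x y : ι, ∃ σ ∈ W, σ x = y}, μ W =
      (-1) ^ (Fintype.card ι - 1) * (Nat.factorial (Fintype.card ι - 1) : ℤ) :=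
  crapo_transitive_subgroups_general μ hbot hrec
end

section
/- Let H₀ ⊴ G₀ with cyclic quotient K₀, let A ≥ 1, and let H ⊆ G₀^A be the kernel of the map (g₁,…,g_A) ↦ π₀(g₁)⋯π₀(g_A) to K₀. Suppose an irreducible character θ of H is fixed by the cyclic shift σ of coordinates. For any irreducible character η = (η₁,…,η_A) of G₀^A lying over θ, if η restricted to H is σ-invariant, then there exist an irreducible character η₀ of G₀ and a character ξ of K₀ with ξ^A·η₀ = η₀ such that η_j = ξ^{j−1}·η₀ for 1 ≤ j ≤ A. -/
/-!
Let `V i` afford `η i`. For a linear character `ξ` of `K₀`, the scalar product of `ξ · η (i - 1)`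
with `η i` is `|G₀| · dim Hom(V i, ξ · V (i - 1))`. By orthogonality for the finite abelian group
`K₀`, summing `∏ i` of these over all `ξ` gives `|K̂₀|` times a sum over `H = ker (prodProj A π₀)`,
where the shift invariance of `η|_H` lets one replace `η (i - 1)` by `η i`. The new sum has a
nonzero term at `ξ = 1`, so for some `ξ` all `V i ≅ ξ · V (i - 1)`, i.e. `η i = ξ · η (i - 1)`;
iterating around the cycle `Fin A` gives `η j = ξ ^ j · η 0` and `ξ ^ A · η 0 = η 0`.
-/

open scoped Classical

noncomputable section

def prodProj {G₀ K₀ : Type} [Group G₀] [CommGroup K₀] (A : ℕ) (π₀ : G₀ →* K₀) :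
    (Fin A → G₀) →* K₀ where
  toFun g := ∏ i, π₀ (g i)
  map_one' := by simp
  map_mul' x y := by simp [Finset.prod_mul_distrib]

namespace FDRep

open CategoryTheory

variable {k G : Type*} [Field k]

section Monoid

variable [Monoid G]

def twistRep (χ : G →* kˣ) (V : FDRep k G) : Representation k G V where
  toFun g := (χ g : k) • V.ρ g
  map_one' := by simp
  map_mul' g h := by
    ext v
    simp only [map_mul, Units.val_mul, Module.End.mul_apply, LinearMap.smul_apply, map_smul,
      smul_smul, mul_comm]

def twist (χ : G →* kˣ) (V : FDRep k G) : FDRep k G :=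
  ⟨V.V, (MulEquiv.toMonoidHom (MulEquiv.symm InducedCategory.endEquiv)).comp
    ((ModuleCat.endRingEquiv V.V.obj).symm.toMonoidHom.comp (twistRep χ V))⟩

lemma character_twist (χ : G →* kˣ) (V : FDRep k G) (g : G) :
    (twist χ V).character g = χ g * V.character g :=
  LinearMap.map_smul (LinearMap.trace k V) (χ g : k) (V.ρ g)

def twistFunctor (χ : G →* kˣ) : FDRep k G ⥤ FDRep k G where
  obj := twist χ
  map f := ⟨f.hom, fun g => by
    change ((χ g : k) • Action.ρ _ g) ≫ f.hom = f.hom ≫ ((χ g : k) • Action.ρ _ g)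
    rw [Linear.smul_comp, Linear.comp_smul, f.comm g]⟩

def twistTwistIso {χ ψ : G →* kˣ} (h : χ * ψ = 1) (V : FDRep k G) : twist χ (twist ψ V) ≅ V :=
  Action.mkIso (Iso.refl _) fun g => by
    change ((χ g : k) • (ψ g : k) • Action.ρ V g) ≫ 𝟙 _ = 𝟙 _ ≫ Action.ρ V g
    rw [Category.comp_id, Category.id_comp, smul_smul, ← Units.val_mul, ← MonoidHom.mul_apply, h,
      MonoidHom.one_apply, Units.val_one, one_smul]

def twistOneIso (V : FDRep k G) : twist 1 V ≅ V :=
  Action.mkIso (Iso.refl _) fun g => by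
    change (((1 : G →* kˣ) g : k) • Action.ρ V g) ≫ 𝟙 _ = 𝟙 _ ≫ Action.ρ V g
    rw [Category.comp_id, Category.id_comp, MonoidHom.one_apply, Units.val_one, one_smul]

def twistEquiv (χ : G →* kˣ) : FDRep k G ≌ FDRep k G where
  functor := twistFunctor χ
  inverse := twistFunctor χ⁻¹
  unitIso := NatIso.ofComponents (fun V => (twistTwistIso (inv_mul_cancel χ) V).symm)
  counitIso := NatIso.ofComponents (fun V => twistTwistIso (mul_inv_cancel χ) V)

instance simple_twist (χ : G →* kˣ) (V : FDRep k G) [Simple V] : Simple (twist χ V) :=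
  simple_obj (twistEquiv χ).functor V

end Monoid

theorem sum_mul_twist_character_mul_character_inv [Group G] [Fintype G]
    [Invertible (Nat.card G : k)] (χ : G →* kˣ) (V W : FDRep k G) :
    ∑ g : G, (χ g : k) * V.character g * W.character g⁻¹ =
      Nat.card G * Module.finrank k (W ⟶ twist χ V) := by
  rw [← scalar_product_char_eq_finrank_equivariant, mul_inv_cancel_left₀ (Invertible.ne_zero _)]
  simp_rw [character_twist]

theorem finrank_hom_ne_zero_iff [Monoid G] [IsAlgClosed k] {V W : FDRep k G} [Simple V] [Simple W] :
    Module.finrank k (V ⟶ W) ≠ 0 ↔ Nonempty (V ≅ W) := by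
  rw [finrank_hom_simple_simple]
  split_ifs <;> simp_all

end FDRep

namespace MonoidHom

variable {R K : Type*} [CommRing R] [IsDomain R] [CommGroup K] [Finite K]
  [HasEnoughRootsOfUnity R (Monoid.exponent K)] [Fintype (K →* Rˣ)]

theorem sum_units_apply_eq_ite (a : K) :
    ∑ ξ : K →* Rˣ, (ξ a : R) = if a = 1 then (Fintype.card (K →* Rˣ) : R) else 0 := by
  split_ifs with ha
  · simp [ha]
  · obtain ⟨ξ₀, hξ₀⟩ := CommGroup.exists_apply_ne_one_of_hasEnoughRootsOfUnity K R ha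
    refine eq_zero_of_mul_eq_self_left (b := (ξ₀ a : R)) (mt Units.val_eq_one.mp hξ₀) ?_
    rw [Finset.mul_sum]
    exact Fintype.sum_bijective _ (Group.mulLeft_bijective ξ₀) _ _ fun ξ => rfl

theorem sum_units_sum_apply_mul_eq_card_mul_sum_ker {M : Type*} [Group M] [Fintype M]
    (φ : M →* K) (F : M → R) :
    ∑ ξ : K →* Rˣ, ∑ m, (ξ (φ m) : R) * F m =
      Fintype.card (K →* Rˣ) * ∑ h : φ.ker, F h := by
  rw [Finset.sum_comm]
  simp_rw [← Finset.sum_mul, sum_units_apply_eq_ite, ite_mul, zero_mul, ← mem_ker,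
    ← Finset.sum_filter, Finset.mul_sum]
  exact Finset.sum_subtype _ (by simp) _

end MonoidHom

section ShiftInvariance

open CategoryTheory

variable {G K : Type} [Group G] [Fintype G] [CommGroup K] [Fintype K] (π : G →* K) {A : ℕ}

theorem sum_units_prod_sum_eq_card_mul_sum_ker_prodProj {R : Type*} [CommRing R] [IsDomain R]
    [HasEnoughRootsOfUnity R (Monoid.exponent K)] [Fintype (K →* Rˣ)] (ψ : Fin A → G → R) :
    ∑ ξ : K →* Rˣ, ∏ i, ∑ x, (ξ (π x) : R) * ψ i x =
      Fintype.card (K →* Rˣ) * ∑ h : (prodProj A π).ker, ∏ i, ψ i ((h : Fin A → G) i) := by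
  rw [← MonoidHom.sum_units_sum_apply_mul_eq_card_mul_sum_ker (prodProj A π)
    fun g => ∏ i, ψ i (g i)]
  refine Finset.sum_congr rfl fun ξ _ => ?_
  rw [Fintype.prod_sum]
  refine Finset.sum_congr rfl fun g _ => ?_
  simp [prodProj, Finset.prod_mul_distrib]

theorem exists_iso_twist_of_shift_invariant [NeZero A] (V : Fin A → FDRep ℂ G)
    [∀ i, Simple (V i)]
    (hV : ∀ h : (prodProj A π).ker, ∏ i, (V i).character ((h : Fin A → G) i) =
      ∏ i, (V i).character ((h : Fin A → G) (i + 1))) :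
    ∃ ξ : K →* ℂˣ, ∀ i, Nonempty (V i ≅ FDRep.twist (ξ.comp π) (V (i - 1))) := by
  have : Fintype (K →* ℂˣ) := Fintype.ofFinite _
  have : Invertible (Nat.card G : ℂ) := invertibleOfNonzero (Nat.cast_ne_zero.mpr Nat.card_pos.ne')
  have hdim (ξ : K →* ℂˣ) (W W' : FDRep ℂ G) :
      ∑ g, (ξ (π g) : ℂ) * W.character g * W'.character g⁻¹ =
        Nat.card G * Module.finrank ℂ (W' ⟶ FDRep.twist (ξ.comp π) W) :=
    FDRep.sum_mul_twist_character_mul_character_inv (ξ.comp π) W W'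
  have hshift : ∑ ξ : K →* ℂˣ, ∏ i, ∑ g,
        (ξ (π g) : ℂ) * (V (i - 1)).character g * (V i).character g⁻¹ =
      ∑ ξ : K →* ℂˣ, ∏ i, ∑ g, (ξ (π g) : ℂ) * (V i).character g * (V i).character g⁻¹ := by
    simp_rw [mul_assoc, sum_units_prod_sum_eq_card_mul_sum_ker_prodProj]
    congr 1
    refine Finset.sum_congr rfl fun h _ => ?_
    rw [Finset.prod_mul_distrib, Finset.prod_mul_distrib, hV h]
    congr 1
    exact Fintype.prod_equiv (Equiv.subRight 1) _ _ fun i => by simp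
  simp_rw [hdim] at hshift
  norm_cast at hshift
  have hdiag : ∑ ξ : K →* ℂˣ, ∏ i,
      Nat.card G * Module.finrank ℂ (V i ⟶ FDRep.twist (ξ.comp π) (V i)) ≠ 0 := by
    refine fun h => Finset.prod_ne_zero_iff.mpr (fun i _ => mul_ne_zero Nat.card_pos.ne' ?_)
      (Finset.sum_eq_zero_iff.mp h 1 (Finset.mem_univ _))
    rw [FDRep.finrank_hom_ne_zero_iff, MonoidHom.one_comp]
    exact ⟨(FDRep.twistOneIso _).symm⟩
  obtain ⟨ξ, -, hξ⟩ := Finset.exists_ne_zero_of_sum_ne_zero (hshift ▸ hdiag)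
  exact ⟨ξ, fun i => FDRep.finrank_hom_ne_zero_iff.mp
    (right_ne_zero_of_mul (Finset.prod_ne_zero_iff.mp hξ i (Finset.mem_univ i)))⟩

end ShiftInvariance

theorem Fin.eq_pow_val_mul_of_forall_eq_mul_sub_one {M : Type*} [Monoid M] {A : ℕ} [NeZero A]
    (f : Fin A → M) (c : M) (h : ∀ i, f i = c * f (i - 1)) :
    c ^ A * f 0 = f 0 ∧ ∀ j : Fin A, f j = c ^ (j : ℕ) * f 0 := by
  open Fin.NatCast in
  have key : ∀ n : ℕ, f n = c ^ n * f 0 := by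
    intro n
    induction n with
    | zero => simp
    | succ n ih => rw [pow_succ', mul_assoc, ← ih, h, Nat.cast_succ, add_sub_cancel_right]
  exact ⟨by simpa using (key A).symm, fun j => by simpa using key j⟩

theorem shift_invariant_characters {G₀ K₀ : Type} [Group G₀] [Fintype G₀]
    [CommGroup K₀] [Fintype K₀]
    (π₀ : G₀ →* K₀)
    (A : ℕ) [NeZero A]
    (η : Fin A → G₀ → ℂ) (hη : ∀ i, IsIrredChar G₀ (η i))
    (hinv : ∀ h : ↥(prodProj A π₀).ker,
        (∏ i, η i ((h : Fin A → G₀) i)) = ∏ i, η i ((h : Fin A → G₀) (i + 1))) :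
    ∃ (η₀ : G₀ → ℂ) (ξ : K₀ →* ℂ), IsIrredChar G₀ η₀ ∧
      (∀ g : G₀, ξ (π₀ g) ^ A * η₀ g = η₀ g) ∧
      (∀ (j : Fin A) (g : G₀), η j g = ξ (π₀ g) ^ (j : ℕ) * η₀ g) := by
  choose V hVs hVc using hη
  obtain rfl : η = fun i => (V i).character := funext₂ hVc
  obtain ⟨ξ, hξ⟩ := exists_iso_twist_of_shift_invariant π₀ V hinv
  let ζ : K₀ →* ℂ := (Units.coeHom ℂ).comp ξ
  have hstep (g : G₀) (i : Fin A) : (V i).character g = ζ (π₀ g) * (V (i - 1)).character g := by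
    rw [FDRep.char_iso (hξ i).some, FDRep.character_twist]
    rfl
  refine ⟨(V 0).character, ζ, ⟨V 0, hVs 0, fun _ => rfl⟩, fun g => ?_, fun j g => ?_⟩
  · exact (Fin.eq_pow_val_mul_of_forall_eq_mul_sub_one _ _ (hstep g)).1
  · exact (Fin.eq_pow_val_mul_of_forall_eq_mul_sub_one _ _ (hstep g)).2 j
end
end

section
/- Let τ be a multi-partition type of size n/A (a function from partitions to ℕ with Σ_λ τ(λ)|λ| = n/A), and let A·τ be the type obtained by multiplying every multiplicity by A. Then for all positive divisors s: (i) d_{A·τ} = (d_τ)^A where d_τ = Π_λ (|λ|!/Π_{cells} hook)^{τ(λ)}; (ii) #(A·τ) = A·#τ where #τ = Σ_λ τ(λ); and (iii) the combinatorial counts satisfy ϑ(τ,n)·ν(τ,j) = A^{#τ/j}·ϑ(A·τ,n)·ν(A·τ,A·j) for every j, where ν(τ,j) is the number of elements of the Young-type stabilizer group W_τ all of whose orbits have size exactly j, and ϑ(τ,n) counts the admissible labelled set systems 𝓘 of type τ. -/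
open scoped Classical

noncomputable section

/-- A partition, encoded as a nonempty decreasing list of positive parts. -/
def IsPartitionList (l : List ℕ) : Prop :=
  l ≠ [] ∧ l.Pairwise (· ≥ ·) ∧ ∀ x ∈ l, 0 < x

/-- Column length of a Young diagram at column `j` (0-based). -/
def colLen (l : List ℕ) (j : ℕ) : ℕ := (l.filter fun x => j < x).length

/-- Hook length of the cell `(i,j)` (0-based) of the Young diagram of `l`. -/
def hookLen (l : List ℕ) (i j : ℕ) : ℕ := l.getD i 0 + colLen l j - i - j - 1

/-- The product of all hook lengths of the Young diagram of `l`. -/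
def hookProd (l : List ℕ) : ℕ :=
  ∏ i ∈ Finset.range l.length, ∏ j ∈ Finset.range (l.getD i 0), hookLen l i j

/-- Dimension `χ^λ(1) = |λ|!/Π hooks` of the irreducible `S_{|λ|}`-representation. -/
def partDim (l : List ℕ) : ℕ := (Nat.factorial l.sum) / hookProd l

/-- `d_τ = Π_λ (χ^λ(1))^{m_λ}` for a multi-partition type `τ`. -/
def dConst (τ : List ℕ →₀ ℕ) : ℕ := τ.prod fun l m => (partDim l) ^ m

/-- Total multiplicity `#τ = Σ_λ m_λ`. -/
def typeCount (τ : List ℕ →₀ ℕ) : ℕ := τ.sum fun _ m => m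

/-- Total size `Σ_λ m_λ |λ|` of a type. -/
def typeSize (τ : List ℕ →₀ ℕ) : ℕ := τ.sum fun l m => m * l.sum

/-- `ν(τ,j)`: the number of elements of `W_τ = Π_λ S_{m_λ}` (fiber-preserving permutations
of the canonical index set of `τ`) all of whose orbits have size exactly `j`. -/
def nuCount (τ : List ℕ →₀ ℕ) (j : ℕ) : ℕ :=
  Nat.card {σ : Equiv.Perm ((l : {l // l ∈ τ.support}) × Fin (τ l.1)) //
    (∀ x, (σ x).1 = x.1) ∧ ∀ x, Function.minimalPeriod (⇑σ) x = j}

/-- `ϑ(A, n, τ)`: the number of admissible collections `𝓘` of tuples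
`(λ^{(ι)}, I₁^{(ι)},…,I_A^{(ι)})` of disjoint subsets of `{1,…,n}` of sizes `|λ^{(ι)}|`
partitioning `{1,…,n}`, of induced type `τ`. -/
def thetaCount (A n : ℕ) (τ : List ℕ →₀ ℕ) : ℕ :=
  Nat.card {𝓘 : Finset (List ℕ × (Fin A → Finset (Fin n))) //
    (∀ p ∈ 𝓘, IsPartitionList p.1 ∧ ∀ a : Fin A, (p.2 a).card = p.1.sum) ∧
    (∀ p ∈ 𝓘, ∀ q ∈ 𝓘, ∀ a b : Fin A,
      (p ≠ q ∨ a ≠ b) → Disjoint (p.2 a) (q.2 b)) ∧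
    (∀ i : Fin n, ∃ p ∈ 𝓘, ∃ a : Fin A, i ∈ p.2 a) ∧
    (∀ l : List ℕ, τ l = (𝓘.filter fun p => p.1 = l).card)}

/-! Flattening a system of type `τ`, i.e. splitting each tuple `(λ, I₁, …, I_A)` into the `A`
blocks `(λ, I_a)`, gives a system of type `A • τ`; conversely a system of type `A • τ` comes
from exactly those of type `τ` obtained by grouping, for each `λ`, its `A τ(λ)` blocks into
`τ(λ)` ordered `A`-tuples, which can be done in `(A τ(λ))! / τ(λ)!` ways. The permutations of an
`m`-set all of whose cycles have length `j` number `m! / ((m/j)! j^(m/j))` if `j ∣ m` and none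
otherwise, so both sides of (iii) factor over `λ`, and the factor at `λ` is the identity
`(A m)!/m! · m!/(k! j^k) = A^k · (A m)!/(k! (A j)^k)` with `k = m/j`. -/

theorem Nat.card_eq_card_mul_of_fibers_equiv {X Y F : Type*} (Φ : X → Y)
    (h : ∀ y, Nonempty ({x // Φ x = y} ≃ F)) : Nat.card X = Nat.card Y * Nat.card F := by
  rw [← Nat.card_prod, ← Nat.card_congr (Equiv.sigmaFiberEquiv Φ),
    Nat.card_congr ((Equiv.sigmaCongrRight fun y => (h y).some).trans (Equiv.sigmaEquivProd Y F))]

theorem Multiset.prod_factorial_count_replicate (k j : ℕ) :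
    ∏ n ∈ (Multiset.replicate k j).toFinset, ((Multiset.replicate k j).count n).factorial =
      k.factorial := by
  rcases Nat.eq_zero_or_pos k with rfl | hk
  · simp
  · rw [Multiset.toFinset_replicate, if_neg hk.ne', Finset.prod_singleton,
      Multiset.count_replicate_self]

namespace Equiv.Perm

open Function

section CycleType

open _root_.Finset

variable {α : Type*} [Fintype α] [DecidableEq α]

theorem minimalPeriod_eq_card_support_cycleOf (σ : Perm α) {x : α} (hx : σ x ≠ x) :
    minimalPeriod σ x = #(σ.cycleOf x).support := by
  have hc := σ.isCycle_cycleOf hx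
  rw [← hc.orderOf, orderOf, minimalPeriod_eq_minimalPeriod_iff]
  intro n
  rw [isPeriodicPt_mul_iff_pow_eq_one, hc.pow_eq_one_iff' (by rwa [cycleOf_apply_self]),
    cycleOf_pow_apply_self, IsPeriodicPt, IsFixedPt, ← coe_pow]

theorem card_support_cycleOf_mem_cycleType (σ : Perm α) {x : α} (hx : σ x ≠ x) :
    #(σ.cycleOf x).support ∈ σ.cycleType :=
  Multiset.mem_map.mpr ⟨σ.cycleOf x,
    cycleOf_mem_cycleFactorsFinset_iff.mpr (mem_support.mpr hx), rfl⟩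

theorem exists_eq_card_support_cycleOf_of_mem_cycleType (σ : Perm α) {k : ℕ}
    (hk : k ∈ σ.cycleType) : ∃ x, σ x ≠ x ∧ k = #(σ.cycleOf x).support := by
  obtain ⟨c, hc, rfl⟩ := Multiset.mem_map.mp hk
  obtain ⟨x, hx⟩ := (mem_cycleFactorsFinset_iff.mp hc).1.nonempty_support
  refine ⟨x, ?_, by rw [← cycle_is_cycleOf hx hc]; rfl⟩
  rw [← mem_support]
  exact mem_cycleFactorsFinset_support_le hc hx

theorem forall_minimalPeriod_eq_iff {σ : Perm α} {j : ℕ} (hj : 2 ≤ j) :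
    (∀ x, minimalPeriod σ x = j) ↔
      j ∣ Fintype.card α ∧ σ.cycleType = Multiset.replicate (Fintype.card α / j) j := by
  constructor
  · intro h
    have hmoved : ∀ x, σ x ≠ x := fun x hx => by
      have := h x
      rw [minimalPeriod_eq_one_iff_isFixedPt.mpr hx] at this
      omega
    have hsupp : σ.support = univ := eq_univ_of_forall fun x => mem_support.mpr (hmoved x)
    have hrep : σ.cycleType = Multiset.replicate (Multiset.card σ.cycleType) j := by
      refine Multiset.eq_replicate_card.mpr fun k hk => ?_
      obtain ⟨x, hx, rfl⟩ := σ.exists_eq_card_support_cycleOf_of_mem_cycleType hk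
      rw [← σ.minimalPeriod_eq_card_support_cycleOf hx, h]
    have hcard : Multiset.card σ.cycleType * j = Fintype.card α := by
      rw [← card_univ, ← hsupp, ← sum_cycleType, hrep, Multiset.sum_replicate, smul_eq_mul,
        Multiset.card_replicate]
    refine ⟨Dvd.intro_left _ hcard, ?_⟩
    rwa [← hcard, Nat.mul_div_cancel _ (by omega)]
  · rintro ⟨hdvd, hrep⟩ x
    have hsupp : σ.support = univ := by
      refine eq_univ_of_card _ ?_
      rw [← sum_cycleType, hrep, Multiset.sum_replicate, smul_eq_mul, Nat.div_mul_cancel hdvd]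
    have hx : σ x ≠ x := mem_support.mp (hsupp ▸ mem_univ x)
    rw [σ.minimalPeriod_eq_card_support_cycleOf hx]
    exact Multiset.eq_of_mem_replicate (hrep ▸ σ.card_support_cycleOf_mem_cycleType hx)

theorem card_cycleType_eq_replicate_mul {k j : ℕ} (hj : 2 ≤ j) (hkj : k * j = Fintype.card α) :
    #({g | g.cycleType = Multiset.replicate k j} : Finset (Perm α)) * (k.factorial * j ^ k) =
      (Fintype.card α).factorial := by
  have h := card_of_cycleType_mul_eq (α := α) (Multiset.replicate k j)
  have hsum : (Multiset.replicate k j).sum = Fintype.card α := by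
    rw [Multiset.sum_replicate, smul_eq_mul, hkj]
  rwa [if_pos ⟨hsum.le, fun a ha => Multiset.eq_of_mem_replicate ha ▸ hj⟩, hsum, Nat.sub_self,
    Nat.factorial_zero, one_mul, Multiset.prod_replicate,
    Multiset.prod_factorial_count_replicate, mul_comm (j ^ k)] at h

theorem card_forall_minimalPeriod_eq_mul {j : ℕ} (hj : 0 < j) :
    Nat.card {σ : Perm α // ∀ x, minimalPeriod σ x = j} *
        ((Fintype.card α / j).factorial * j ^ (Fintype.card α / j)) =
      if j ∣ Fintype.card α then (Fintype.card α).factorial else 0 := by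
  -- Cycle types only record cycles of length `≥ 2`, so `j = 1` (the identity) is separate.
  obtain rfl | hj2 : j = 1 ∨ 2 ≤ j := by omega
  · have hone : Nat.card {σ : Perm α // ∀ x, minimalPeriod σ x = 1} = 1 :=
      Nat.card_eq_one_iff_exists.mpr ⟨⟨1, fun _ => minimalPeriod_id⟩, fun σ =>
        Subtype.ext (Equiv.ext fun x => minimalPeriod_eq_one_iff_isFixedPt.mp (σ.2 x))⟩
    rw [hone, if_pos (one_dvd _), Nat.div_one, one_pow, mul_one, one_mul]
  · simp_rw [forall_minimalPeriod_eq_iff hj2]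
    split_ifs with hdvd
    · rw [Nat.card_eq_fintype_card, Fintype.card_subtype,
        ← card_cycleType_eq_replicate_mul hj2 (Nat.div_mul_cancel hdvd)]
      simp only [hdvd, true_and]
    · simp [hdvd]

end CycleType

section Fiberwise

variable {ι : Type*} {β : ι → Type*}

theorem sigmaCongrRight_iterate_apply (F : ∀ i, Perm (β i)) (n : ℕ) (i : ι) (y : β i) :
    (⇑(sigmaCongrRight F))^[n] ⟨i, y⟩ = ⟨i, (⇑(F i))^[n] y⟩ := by
  induction n with
  | zero => rfl
  | succ n ih => rw [iterate_succ_apply', iterate_succ_apply', ih]; rfl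

theorem minimalPeriod_sigmaCongrRight (F : ∀ i, Perm (β i)) (x : Σ i, β i) :
    minimalPeriod (sigmaCongrRight F) x = minimalPeriod (F x.1) x.2 :=
  minimalPeriod_eq_minimalPeriod_iff.mpr fun n => by
    obtain ⟨i, y⟩ := x
    simp [IsPeriodicPt, IsFixedPt, sigmaCongrRight_iterate_apply]

theorem exists_sigmaCongrRight_eq [∀ i, Finite (β i)] {σ : Perm (Σ i, β i)}
    (hσ : ∀ x, (σ x).1 = x.1) : ∃ F : ∀ i, Perm (β i), sigmaCongrRight F = σ := by
  let f (i : ι) (y : β i) : β i := cast (congrArg β (hσ ⟨i, y⟩)) (σ ⟨i, y⟩).2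
  have hf (i : ι) (y : β i) : σ ⟨i, y⟩ = ⟨i, f i y⟩ :=
    Sigma.ext (hσ ⟨i, y⟩) (cast_heq _ _).symm
  have hinj (i : ι) : Injective (f i) := fun y y' h => by
    have := σ.injective ((hf i y).trans (h ▸ (hf i y').symm))
    exact eq_of_heq (Sigma.mk.inj this).2
  exact ⟨fun i => Equiv.ofBijective (f i) (hinj i).bijective_of_finite,
    Equiv.ext fun ⟨i, y⟩ => (hf i y).symm⟩

theorem card_fiberwise_forall_minimalPeriod_eq [∀ i, Finite (β i)] (j : ℕ) :
    Nat.card {σ : Perm (Σ i, β i) // (∀ x, (σ x).1 = x.1) ∧ ∀ x, minimalPeriod σ x = j} =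
      Nat.card (∀ i, {π : Perm (β i) // ∀ y, minimalPeriod π y = j}) := by
  refine (Nat.card_eq_of_bijective (fun F => ⟨sigmaCongrRight fun i => (F i).1, fun _ => rfl,
    fun x => by rw [minimalPeriod_sigmaCongrRight]; exact (F x.1).2 x.2⟩)
    ⟨fun F G h => ?_, ?_⟩).symm
  · have := @sigmaCongrRightHom_injective _ β (fun i => (F i).1) (fun i => (G i).1)
      (congrArg Subtype.val h)
    exact funext fun i => Subtype.ext (congrFun this i)
  · rintro ⟨σ, hσ, hper⟩
    obtain ⟨F, rfl⟩ := exists_sigmaCongrRight_eq hσ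
    refine ⟨fun i => ⟨F i, fun y => ?_⟩, rfl⟩
    simpa [minimalPeriod_sigmaCongrRight] using hper ⟨i, y⟩

end Fiberwise

end Equiv.Perm

open Function in
def uniformPermCount (m j : ℕ) : ℕ :=
  Nat.card {σ : Equiv.Perm (Fin m) // ∀ x, minimalPeriod σ x = j}

theorem nuCount_eq_prod (τ : List ℕ →₀ ℕ) (j : ℕ) :
    nuCount τ j = ∏ l ∈ τ.support, uniformPermCount (τ l) j := by
  rw [nuCount, Equiv.Perm.card_fiberwise_forall_minimalPeriod_eq, Nat.card_pi]
  exact Finset.prod_coe_sort τ.support fun l => uniformPermCount (τ l) j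

theorem uniformPermCount_mul {m j : ℕ} (hj : 0 < j) :
    uniformPermCount m j * ((m / j).factorial * j ^ (m / j)) =
      if j ∣ m then m.factorial else 0 := by
  rw [uniformPermCount]
  simpa only [Fintype.card_fin] using Equiv.Perm.card_forall_minimalPeriod_eq_mul (α := Fin m) hj

theorem uniformPermCount_eq_zero {m j : ℕ} (hj : 0 < j) (hjm : ¬ j ∣ m) :
    uniformPermCount m j = 0 := by
  have := uniformPermCount_mul (m := m) hj
  rw [if_neg hjm, mul_eq_zero] at this
  exact this.resolve_right (by positivity)

section TuplePartition

open Finset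

variable {γ : Type*} {A m : ℕ} {S : Finset γ}

def IsTuplePartition (A : ℕ) (S : Finset γ) (M : Finset (Fin A → γ)) : Prop :=
  (∀ F ∈ M, ∀ a, F a ∈ S) ∧
  (∀ F ∈ M, ∀ G ∈ M, ∀ a b, F a = G b → F = G ∧ a = b) ∧
  (∀ x ∈ S, ∃ F ∈ M, ∃ a, F a = x)

theorem IsTuplePartition.card_eq {M : Finset (Fin A → γ)} (hM : IsTuplePartition A S M) :
    #S = #M * A := by
  have hS : S = (M ×ˢ univ).image fun Fa : (Fin A → γ) × Fin A => Fa.1 Fa.2 := by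
    ext x
    simp only [mem_image, mem_product, mem_univ, and_true, Prod.exists]
    exact ⟨fun hx => let ⟨F, hF, a, ha⟩ := hM.2.2 x hx; ⟨F, a, hF, ha⟩,
      fun ⟨F, a, hF, ha⟩ => ha ▸ hM.1 F hF a⟩
  rw [hS, card_image_of_injOn, card_product, card_univ, Fintype.card_fin]
  rintro ⟨F, a⟩ hF ⟨G, b⟩ hG h
  simp only [coe_product, Set.mem_prod, mem_coe] at hF hG
  obtain ⟨rfl, rfl⟩ := hM.2.1 F hF.1 G hG.1 a b h
  rfl

def rowTuples (e : Fin m × Fin A ≃ S) : Finset (Fin A → γ) :=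
  univ.image fun i a => (e (i, a) : γ)

theorem mem_rowTuples {e : Fin m × Fin A ≃ S} {F : Fin A → γ} :
    F ∈ rowTuples e ↔ ∃ i, (fun a => (e (i, a) : γ)) = F := by
  simp [rowTuples]

theorem isTuplePartition_rowTuples (e : Fin m × Fin A ≃ S) :
    IsTuplePartition A S (rowTuples e) := by
  refine ⟨?_, ?_, fun x hx => ?_⟩
  · rintro F hF a
    obtain ⟨i, rfl⟩ := mem_rowTuples.mp hF
    exact (e (i, a)).2
  · rintro F hF G hG a b h
    obtain ⟨i, rfl⟩ := mem_rowTuples.mp hF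
    obtain ⟨i', rfl⟩ := mem_rowTuples.mp hG
    cases e.injective (Subtype.ext h)
    exact ⟨rfl, rfl⟩
  · exact ⟨_, mem_rowTuples.mpr ⟨(e.symm ⟨x, hx⟩).1, rfl⟩, (e.symm ⟨x, hx⟩).2, by simp⟩

theorem IsTuplePartition.exists_rowTuples_eq {M : Finset (Fin A → γ)}
    (hM : IsTuplePartition A S M) (hcard : #M = m) :
    ∃ e : Fin m × Fin A ≃ S, rowTuples e = M := by
  obtain ⟨g⟩ : Nonempty (Fin m ≃ M) := ⟨(Fintype.equivFinOfCardEq (by simp [hcard])).symm⟩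
  let E : Fin m × Fin A → S := fun p => ⟨(g p.1).1 p.2, hM.1 _ (g p.1).2 p.2⟩
  have hE : Function.Bijective E := by
    refine ⟨fun ⟨i, a⟩ ⟨i', b⟩ h => ?_, fun ⟨x, hx⟩ => ?_⟩
    · obtain ⟨h1, rfl⟩ := hM.2.1 _ (g i).2 _ (g i').2 a b (congrArg Subtype.val h)
      rw [g.injective (Subtype.ext h1)]
    · obtain ⟨F, hF, a, rfl⟩ := hM.2.2 x hx
      exact ⟨(g.symm ⟨F, hF⟩, a), by simp [E]⟩
  refine ⟨Equiv.ofBijective E hE, ?_⟩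
  ext F
  rw [mem_rowTuples]
  exact ⟨by rintro ⟨i, rfl⟩; exact (g i).2, fun hF => ⟨g.symm ⟨F, hF⟩, by simp [E]⟩⟩

theorem rowTuples_eq_iff (hA : 0 < A) {e e' : Fin m × Fin A ≃ S} :
    rowTuples e' = rowTuples e ↔
      ∃ π : Equiv.Perm (Fin m), (π.prodCongr (Equiv.refl _)).trans e = e' := by
  constructor
  · intro h
    have hmem : ∀ i, (fun a => (e' (i, a) : γ)) ∈ rowTuples e := fun i =>
      h ▸ mem_rowTuples.mpr ⟨i, rfl⟩
    choose π hπ using fun i => mem_rowTuples.mp (hmem i)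
    have hπe : ∀ i a, e (π i, a) = e' (i, a) := fun i a =>
      Subtype.ext (congrFun (hπ i) a)
    have hinj : Function.Injective π := fun i i' hii' => by
      have := hπe i' ⟨0, hA⟩
      rw [← hii', hπe, e'.apply_eq_iff_eq] at this
      exact congrArg Prod.fst this
    exact ⟨Equiv.ofBijective π hinj.bijective_of_finite, Equiv.ext fun p => hπe p.1 p.2⟩
  · rintro ⟨π, rfl⟩
    ext F
    simp only [mem_rowTuples, Equiv.trans_apply, Equiv.prodCongr_apply, Prod.map, Equiv.coe_refl,
      id]
    exact ⟨fun ⟨i, hi⟩ => ⟨π i, hi⟩, fun ⟨i, hi⟩ => ⟨π.symm i, by simpa using hi⟩⟩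

theorem prodCongr_trans_injective (hA : 0 < A) (e : Fin m × Fin A ≃ S) :
    Function.Injective fun π : Equiv.Perm (Fin m) => (π.prodCongr (Equiv.refl _)).trans e :=
  fun _ _ h => Equiv.ext fun i =>
    congrArg Prod.fst (e.injective (DFunLike.congr_fun h (i, ⟨0, hA⟩)))

theorem card_tuplePartitions_mul_factorial (hA : 0 < A) (hS : #S = A * m) :
    Nat.card {M // IsTuplePartition A S M} * m.factorial = (A * m).factorial := by
  have hfiber (M : {M // IsTuplePartition A S M}) :
      Nonempty ({e : Fin m × Fin A ≃ S //
        (⟨rowTuples e, isTuplePartition_rowTuples e⟩ : {M // _}) = M} ≃ Equiv.Perm (Fin m)) := by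
    obtain ⟨M, hM⟩ := M
    have hcard : #M = m := Nat.eq_of_mul_eq_mul_left hA (by rw [← hS, hM.card_eq, mul_comm])
    obtain ⟨e₀, rfl⟩ := hM.exists_rowTuples_eq hcard
    refine ⟨(Equiv.ofBijective (fun π => ⟨(π.prodCongr (Equiv.refl _)).trans e₀,
      Subtype.ext ((rowTuples_eq_iff hA).mpr ⟨π, rfl⟩)⟩)
      ⟨fun _ _ h => prodCongr_trans_injective hA e₀ (congrArg Subtype.val h), fun e => ?_⟩).symm⟩
    obtain ⟨π, hπ⟩ := (rowTuples_eq_iff hA).mp (congrArg Subtype.val e.2)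
    exact ⟨π, Subtype.ext hπ⟩
  have hcardS : Fintype.card (Fin m × Fin A) = Fintype.card S := by
    rw [Fintype.card_prod, Fintype.card_fin, Fintype.card_fin, Fintype.card_coe, hS, mul_comm]
  calc Nat.card {M // IsTuplePartition A S M} * m.factorial
      = Nat.card {M // IsTuplePartition A S M} * Nat.card (Equiv.Perm (Fin m)) := by
        rw [Nat.card_perm, Nat.card_fin]
    _ = Nat.card (Fin m × Fin A ≃ S) := (Nat.card_eq_card_mul_of_fibers_equiv _ hfiber).symm
    _ = (A * m).factorial := by
        rw [Nat.card_eq_fintype_card, Fintype.card_equiv (Fintype.equivOfCardEq hcardS),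
          Fintype.card_prod, Fintype.card_fin, Fintype.card_fin, mul_comm]

theorem card_tuplePartitions (hA : 0 < A) (hS : #S = A * m) :
    Nat.card {M // IsTuplePartition A S M} = (A * m).factorial / m.factorial :=
  (Nat.div_eq_of_eq_mul_left m.factorial_pos (card_tuplePartitions_mul_factorial hA hS).symm).symm

end TuplePartition

theorem IsPartitionList.sum_pos {l : List ℕ} (h : IsPartitionList l) : 0 < l.sum :=
  l.sum_pos h.2.2 h.1

section BlockSystem

open Finset

variable {β : Type*} {A : ℕ} {τ : List ℕ →₀ ℕ}

def IsBlockSystem (A : ℕ) (τ : List ℕ →₀ ℕ) (𝓘 : Finset (List ℕ × (Fin A → Finset β))) :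
    Prop :=
  (∀ p ∈ 𝓘, IsPartitionList p.1 ∧ ∀ a : Fin A, (p.2 a).card = p.1.sum) ∧
  (∀ p ∈ 𝓘, ∀ q ∈ 𝓘, ∀ a b : Fin A,
    (p ≠ q ∨ a ≠ b) → Disjoint (p.2 a) (q.2 b)) ∧
  (∀ i : β, ∃ p ∈ 𝓘, ∃ a : Fin A, i ∈ p.2 a) ∧
  (∀ l : List ℕ, τ l = (𝓘.filter fun p => p.1 = l).card)

theorem thetaCount_eq_card (A n : ℕ) (τ : List ℕ →₀ ℕ) :
    thetaCount A n τ = Nat.card {𝓘 // IsBlockSystem (β := Fin n) A τ 𝓘} := rfl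

/-- Splits every tuple `(λ, I₁, …, I_A)` into the `A` one-block tuples `(λ, I_a)`. -/
def flattenTuples (𝓘 : Finset (List ℕ × (Fin A → Finset β))) :
    Finset (List ℕ × (Fin 1 → Finset β)) :=
  (𝓘 ×ˢ univ).image fun pa => (pa.1.1, fun _ => pa.1.2 pa.2)

def blocksWithLabel (𝓘' : Finset (List ℕ × (Fin 1 → Finset β))) (l : List ℕ) :
    Finset (Finset β) :=
  {p ∈ 𝓘' | p.1 = l}.image fun p => p.2 0

def tuplesWithLabel (𝓘 : Finset (List ℕ × (Fin A → Finset β))) (l : List ℕ) :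
    Finset (Fin A → Finset β) :=
  {p ∈ 𝓘 | p.1 = l}.image Prod.snd

def ofTuplesWithLabel (s : Finset (List ℕ)) (M : s → Finset (Fin A → Finset β)) :
    Finset (List ℕ × (Fin A → Finset β)) :=
  s.attach.biUnion fun l => (M l).image (Prod.mk l.1)

variable {𝓘 : Finset (List ℕ × (Fin A → Finset β))} {𝓘' : Finset (List ℕ × (Fin 1 → Finset β))}
  {s : Finset (List ℕ)}

theorem mem_flattenTuples {p' : List ℕ × (Fin 1 → Finset β)} :
    p' ∈ flattenTuples 𝓘 ↔ ∃ p ∈ 𝓘, ∃ a, (p.1, fun _ => p.2 a) = p' := by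
  simp [flattenTuples]

theorem mem_blocksWithLabel {l : List ℕ} {B : Finset β} :
    B ∈ blocksWithLabel 𝓘' l ↔ ∃ p ∈ 𝓘', p.1 = l ∧ p.2 0 = B := by
  simp [blocksWithLabel, and_assoc]

theorem mem_tuplesWithLabel {l : List ℕ} {F : Fin A → Finset β} :
    F ∈ tuplesWithLabel 𝓘 l ↔ (l, F) ∈ 𝓘 := by
  simp [tuplesWithLabel]

theorem mem_ofTuplesWithLabel {M : s → Finset (Fin A → Finset β)}
    {p : List ℕ × (Fin A → Finset β)} :
    p ∈ ofTuplesWithLabel s M ↔ ∃ hl : p.1 ∈ s, p.2 ∈ M ⟨p.1, hl⟩ := by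
  simp only [ofTuplesWithLabel, mem_biUnion, mem_attach, mem_image, true_and, Subtype.exists]
  constructor
  · rintro ⟨l, hl, F, hF, rfl⟩
    exact ⟨hl, hF⟩
  · rintro ⟨hl, hF⟩
    exact ⟨p.1, hl, p.2, hF, rfl⟩

theorem tuplesWithLabel_ofTuplesWithLabel (M : s → Finset (Fin A → Finset β)) (l : s) :
    tuplesWithLabel (ofTuplesWithLabel s M) l = M l := by
  ext F
  simp [mem_tuplesWithLabel, mem_ofTuplesWithLabel]

theorem card_tuplesWithLabel (𝓘 : Finset (List ℕ × (Fin A → Finset β))) (l : List ℕ) :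
    #(tuplesWithLabel 𝓘 l) = #{p ∈ 𝓘 | p.1 = l} :=
  card_image_of_injOn fun _ hp _ hq h =>
    Prod.ext ((mem_filter.mp hp).2.trans (mem_filter.mp hq).2.symm) h

theorem filter_flattenTuples (𝓘 : Finset (List ℕ × (Fin A → Finset β))) (l : List ℕ) :
    {p' ∈ flattenTuples 𝓘 | p'.1 = l} = flattenTuples {p ∈ 𝓘 | p.1 = l} := by
  ext p'
  simp only [mem_filter, mem_flattenTuples]
  constructor
  · rintro ⟨⟨p, hp, a, rfl⟩, rfl⟩
    exact ⟨p, ⟨hp, rfl⟩, a, rfl⟩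
  · rintro ⟨p, ⟨hp, rfl⟩, a, rfl⟩
    exact ⟨⟨p, hp, a, rfl⟩, rfl⟩

theorem card_flattenTuples (hinj : ∀ p ∈ 𝓘, ∀ q ∈ 𝓘, ∀ a b, p.2 a = q.2 b → p = q ∧ a = b) :
    #(flattenTuples 𝓘) = #𝓘 * A := by
  rw [flattenTuples, card_image_of_injOn, card_product, card_univ, Fintype.card_fin]
  rintro ⟨p, a⟩ hp ⟨q, b⟩ hq h
  simp only [coe_product, Set.mem_prod, mem_coe] at hp hq
  obtain ⟨rfl, rfl⟩ := hinj p hp.1 q hq.1 a b (congrFun (congrArg Prod.snd h) 0)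
  rfl

namespace IsBlockSystem

variable {σ : List ℕ →₀ ℕ} {p q : List ℕ × (Fin A → Finset β)}

theorem eq_of_block_eq (h : IsBlockSystem A τ 𝓘) (hp : p ∈ 𝓘) (hq : q ∈ 𝓘) {a b : Fin A}
    (hpq : p.2 a = q.2 b) : p = q ∧ a = b := by
  by_contra hne
  have hdisj := h.2.1 p hp q hq a b (by tauto)
  rw [hpq, disjoint_self, bot_eq_empty, ← card_eq_zero, (h.1 q hq).2 b] at hdisj
  exact (h.1 q hq).1.sum_pos.ne' hdisj

theorem mem_support (h : IsBlockSystem A τ 𝓘) (hp : p ∈ 𝓘) : p.1 ∈ τ.support := by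
  rw [Finsupp.mem_support_iff, h.2.2.2, ← pos_iff_ne_zero, card_pos]
  exact ⟨p, mem_filter.mpr ⟨hp, rfl⟩⟩

theorem flattenTuples (h : IsBlockSystem A τ 𝓘) :
    IsBlockSystem 1 (A • τ) (flattenTuples 𝓘) := by
  refine ⟨?_, ?_, fun i => ?_, fun l => ?_⟩
  · intro p' hp'
    obtain ⟨p, hp, a, rfl⟩ := mem_flattenTuples.mp hp'
    exact ⟨(h.1 p hp).1, fun _ => (h.1 p hp).2 a⟩
  · intro p' hp' q' hq' a' b' hne
    obtain ⟨p, hp, a, rfl⟩ := mem_flattenTuples.mp hp'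
    obtain ⟨q, hq, b, rfl⟩ := mem_flattenTuples.mp hq'
    refine h.2.1 p hp q hq a b ?_
    by_contra! hpq
    obtain ⟨rfl, rfl⟩ := hpq
    exact hne.elim (absurd rfl) (absurd (Subsingleton.elim a' b'))
  · obtain ⟨p, hp, a, hi⟩ := h.2.2.1 i
    exact ⟨_, mem_flattenTuples.mpr ⟨p, hp, a, rfl⟩, 0, hi⟩
  · rw [filter_flattenTuples, card_flattenTuples, ← h.2.2.2, Finsupp.smul_apply, smul_eq_mul,
      mul_comm]
    intro p hp q hq a b hpq
    exact h.eq_of_block_eq (mem_filter.mp hp).1 (mem_filter.mp hq).1 hpq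

theorem card_blocksWithLabel (h : IsBlockSystem 1 σ 𝓘') (l : List ℕ) :
    #(blocksWithLabel 𝓘' l) = σ l := by
  rw [blocksWithLabel, card_image_of_injOn, h.2.2.2]
  intro p hp q hq hpq
  exact (h.eq_of_block_eq (mem_filter.mp hp).1 (mem_filter.mp hq).1 hpq).1

theorem isTuplePartition_tuplesWithLabel (h : IsBlockSystem A τ 𝓘) (l : List ℕ) :
    IsTuplePartition A (blocksWithLabel (_root_.flattenTuples 𝓘) l) (tuplesWithLabel 𝓘 l) := by
  refine ⟨fun F hF a => ?_, fun F hF G hG a b hab => ?_, fun B hB => ?_⟩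
  · exact mem_blocksWithLabel.mpr
      ⟨_, mem_flattenTuples.mpr ⟨_, mem_tuplesWithLabel.mp hF, a, rfl⟩, rfl, rfl⟩
  · obtain ⟨hFG, rfl⟩ :=
      h.eq_of_block_eq (mem_tuplesWithLabel.mp hF) (mem_tuplesWithLabel.mp hG) hab
    exact ⟨congrArg Prod.snd hFG, rfl⟩
  · obtain ⟨p', hp', rfl, rfl⟩ := mem_blocksWithLabel.mp hB
    obtain ⟨p, hp, a, rfl⟩ := mem_flattenTuples.mp hp'
    exact ⟨p.2, mem_tuplesWithLabel.mpr hp, a, rfl⟩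

theorem ofTuplesWithLabel_tuplesWithLabel (h : IsBlockSystem A τ 𝓘) :
    ofTuplesWithLabel τ.support (fun l => tuplesWithLabel 𝓘 l) = 𝓘 := by
  ext p
  rw [mem_ofTuplesWithLabel]
  exact ⟨fun ⟨_, hp⟩ => mem_tuplesWithLabel.mp hp,
    fun hp => ⟨h.mem_support hp, mem_tuplesWithLabel.mpr hp⟩⟩

end IsBlockSystem

section OfTuplesWithLabel

variable {M : τ.support → Finset (Fin A → Finset β)}

theorem exists_block_of_mem_ofTuplesWithLabel {M : s → Finset (Fin A → Finset β)}
    (hM : ∀ l, IsTuplePartition A (blocksWithLabel 𝓘' l.1) (M l))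
    {p : List ℕ × (Fin A → Finset β)} (hp : p ∈ ofTuplesWithLabel s M) (a : Fin A) :
    ∃ q ∈ 𝓘', q.1 = p.1 ∧ q.2 0 = p.2 a := by
  obtain ⟨hl, hF⟩ := mem_ofTuplesWithLabel.mp hp
  exact mem_blocksWithLabel.mp ((hM _).1 _ hF a)

theorem exists_mem_tuple_eq_block (hA : 0 < A) (h' : IsBlockSystem 1 (A • τ) 𝓘')
    (hM : ∀ l, IsTuplePartition A (blocksWithLabel 𝓘' l.1) (M l))
    {q : List ℕ × (Fin 1 → Finset β)} (hq : q ∈ 𝓘') :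
    ∃ hl : q.1 ∈ τ.support, ∃ F ∈ M ⟨q.1, hl⟩, ∃ a, F a = q.2 0 := by
  have hl : q.1 ∈ τ.support := by
    simpa only [Finsupp.support_smul_eq (b := A) hA.ne'] using h'.mem_support hq
  exact ⟨hl, (hM _).2.2 _ (mem_blocksWithLabel.mpr ⟨q, hq, rfl, rfl⟩)⟩

theorem card_filter_ofTuplesWithLabel (hA : 0 < A) (h' : IsBlockSystem 1 (A • τ) 𝓘')
    (hM : ∀ l, IsTuplePartition A (blocksWithLabel 𝓘' l.1) (M l)) (l : List ℕ) :
    τ l = #{p ∈ ofTuplesWithLabel τ.support M | p.1 = l} := by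
  rw [← card_tuplesWithLabel]
  by_cases hl : l ∈ τ.support
  · rw [tuplesWithLabel_ofTuplesWithLabel M ⟨l, hl⟩]
    have := (hM ⟨l, hl⟩).card_eq
    rw [h'.card_blocksWithLabel, Finsupp.smul_apply, smul_eq_mul, mul_comm] at this
    exact Nat.eq_of_mul_eq_mul_right hA this
  · rw [Finsupp.notMem_support_iff.mp hl, eq_comm, card_eq_zero, eq_empty_iff_forall_notMem]
    intro F hF
    exact hl (mem_ofTuplesWithLabel.mp (mem_tuplesWithLabel.mp hF)).1

theorem isBlockSystem_ofTuplesWithLabel (hA : 0 < A) (h' : IsBlockSystem 1 (A • τ) 𝓘')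
    (hM : ∀ l, IsTuplePartition A (blocksWithLabel 𝓘' l.1) (M l)) :
    IsBlockSystem A τ (ofTuplesWithLabel τ.support M) := by
  refine ⟨fun p hp => ?_, fun p hp q hq a b hne => ?_, fun i => ?_,
    card_filter_ofTuplesWithLabel hA h' hM⟩
  · obtain ⟨p', hp', hl, -⟩ := exists_block_of_mem_ofTuplesWithLabel hM hp ⟨0, hA⟩
    refine ⟨hl ▸ (h'.1 p' hp').1, fun a => ?_⟩
    obtain ⟨q', hq', hl', hqa⟩ := exists_block_of_mem_ofTuplesWithLabel hM hp a
    rw [← hqa, ← hl']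
    exact (h'.1 q' hq').2 0
  · obtain ⟨p', hp', hpl, hpa⟩ := exists_block_of_mem_ofTuplesWithLabel hM hp a
    obtain ⟨q', hq', hql, hqb⟩ := exists_block_of_mem_ofTuplesWithLabel hM hq b
    rw [← hpa, ← hqb]
    refine h'.2.1 p' hp' q' hq' 0 0 (Or.inl fun hpq => ?_)
    subst hpq
    obtain ⟨hp1, hF⟩ := mem_ofTuplesWithLabel.mp hp
    obtain ⟨hq1, hG⟩ := mem_ofTuplesWithLabel.mp hq
    have hlabel : p.1 = q.1 := hpl.symm.trans hql
    have hG' : q.2 ∈ M ⟨p.1, hp1⟩ := by simpa only [hlabel] using hG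
    obtain ⟨hFG, hab⟩ := (hM _).2.1 _ hF _ hG' a b (hpa.symm.trans hqb)
    exact hne.elim (· (Prod.ext hlabel hFG)) (· hab)
  · obtain ⟨q, hq, a, hi⟩ := h'.2.2.1 i
    obtain ⟨hl, F, hF, b, hFb⟩ := exists_mem_tuple_eq_block hA h' hM hq
    refine ⟨(q.1, F), mem_ofTuplesWithLabel.mpr ⟨hl, hF⟩, b, ?_⟩
    rw [← Subsingleton.elim 0 a, ← hFb] at hi
    exact hi

theorem flattenTuples_ofTuplesWithLabel (hA : 0 < A) (h' : IsBlockSystem 1 (A • τ) 𝓘')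
    (hM : ∀ l, IsTuplePartition A (blocksWithLabel 𝓘' l.1) (M l)) :
    flattenTuples (ofTuplesWithLabel τ.support M) = 𝓘' := by
  ext q
  rw [mem_flattenTuples]
  constructor
  · rintro ⟨p, hp, a, rfl⟩
    obtain ⟨q', hq', hl, hqa⟩ := exists_block_of_mem_ofTuplesWithLabel hM hp a
    convert hq' using 1
    exact Prod.ext hl.symm (funext fun b => Subsingleton.elim b 0 ▸ hqa.symm)
  · intro hq
    obtain ⟨hl, F, hF, a, hFa⟩ := exists_mem_tuple_eq_block hA h' hM hq
    exact ⟨(q.1, F), mem_ofTuplesWithLabel.mpr ⟨hl, hF⟩, a,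
      Prod.ext rfl (funext fun b => Subsingleton.elim 0 b ▸ hFa)⟩

end OfTuplesWithLabel

theorem card_isBlockSystem [Finite β] (hA : 0 < A) :
    Nat.card {𝓘 // IsBlockSystem (β := β) A τ 𝓘} =
      Nat.card {𝓘' // IsBlockSystem (β := β) 1 (A • τ) 𝓘'} *
        ∏ l ∈ τ.support, (A * τ l).factorial / (τ l).factorial := by
  have hfiber (𝓘' : {𝓘' // IsBlockSystem (β := β) 1 (A • τ) 𝓘'}) :
      Nonempty ({𝓘 : {𝓘 // IsBlockSystem A τ 𝓘} //
          (⟨flattenTuples 𝓘.1, 𝓘.2.flattenTuples⟩ : {𝓘' // _}) = 𝓘'} ≃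
        ∀ l : τ.support, Fin ((A * τ l).factorial / (τ l).factorial)) := by
    obtain ⟨𝓘', h'⟩ := 𝓘'
    have hcount (l : τ.support) :
        Nat.card {M // IsTuplePartition A (blocksWithLabel 𝓘' l.1) M} =
          (A * τ l).factorial / (τ l).factorial :=
      card_tuplePartitions hA (by rw [h'.card_blocksWithLabel, Finsupp.smul_apply, smul_eq_mul])
    refine ⟨Equiv.trans ?_ (Equiv.piCongrRight fun l => Finite.equivFinOfCardEq (hcount l))⟩
    exact {
      toFun := fun 𝓘 l => ⟨tuplesWithLabel 𝓘.1.1 l,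
        by simpa only [show flattenTuples 𝓘.1.1 = 𝓘' from congrArg Subtype.val 𝓘.2]
          using 𝓘.1.2.isTuplePartition_tuplesWithLabel l⟩
      invFun := fun M => ⟨⟨ofTuplesWithLabel τ.support fun l => (M l).1,
          isBlockSystem_ofTuplesWithLabel hA h' fun l => (M l).2⟩,
        Subtype.ext (flattenTuples_ofTuplesWithLabel hA h' fun l => (M l).2)⟩
      left_inv := fun 𝓘 => Subtype.ext (Subtype.ext 𝓘.1.2.ofTuplesWithLabel_tuplesWithLabel)
      right_inv := fun M => funext fun l => Subtype.ext (tuplesWithLabel_ofTuplesWithLabel _ l) }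
  rw [Nat.card_eq_card_mul_of_fibers_equiv _ hfiber, Nat.card_pi]
  simp only [Nat.card_fin]
  exact congrArg _ (prod_coe_sort τ.support fun l => (A * τ l).factorial / (τ l).factorial)

end BlockSystem

theorem factorial_div_mul_uniformPermCount {A j : ℕ} (hA : 0 < A) (hj : 0 < j) (m : ℕ) :
    (A * m).factorial / m.factorial * uniformPermCount m j =
      A ^ (m / j) * uniformPermCount (A * m) (A * j) := by
  by_cases hjm : j ∣ m
  · have hmul := uniformPermCount_mul (m := m) hj
    have hmulA := uniformPermCount_mul (m := A * m) (Nat.mul_pos hA hj)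
    rw [if_pos hjm] at hmul
    rw [if_pos (mul_dvd_mul_left A hjm), Nat.mul_div_mul_left _ _ hA, mul_pow] at hmulA
    refine Nat.eq_of_mul_eq_mul_right (by positivity : 0 < (m / j).factorial * j ^ (m / j)) ?_
    calc (A * m).factorial / m.factorial * uniformPermCount m j * ((m / j).factorial * j ^ (m / j))
        = (A * m).factorial / m.factorial * m.factorial := by rw [mul_assoc, hmul]
      _ = (A * m).factorial :=
          Nat.div_mul_cancel (Nat.factorial_dvd_factorial (Nat.le_mul_of_pos_left m hA))
      _ = _ := by rw [← hmulA]; ring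
  · have hAjm : ¬ A * j ∣ A * m := fun h => hjm (Nat.dvd_of_mul_dvd_mul_left hA h)
    rw [uniformPermCount_eq_zero hj hjm, uniformPermCount_eq_zero (Nat.mul_pos hA hj) hAjm,
      mul_zero, mul_zero]

theorem dConst_smul (A : ℕ) (τ : List ℕ →₀ ℕ) : dConst (A • τ) = dConst τ ^ A := by
  rw [dConst, Finsupp.prod_of_support_subset _ Finsupp.support_smul _ fun _ _ => pow_zero _,
    dConst, Finsupp.prod, ← Finset.prod_pow]
  refine Finset.prod_congr rfl fun l _ => ?_
  rw [Finsupp.smul_apply, smul_eq_mul, mul_comm, pow_mul]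

theorem typeCount_smul (A : ℕ) (τ : List ℕ →₀ ℕ) : typeCount (A • τ) = A * typeCount τ := by
  rw [typeCount, Finsupp.sum_smul_index fun _ => rfl, typeCount, Finsupp.mul_sum]

theorem type_rescaling_identities_general (A n j : ℕ) (hA : 0 < A) (hj : 0 < j)
    (τ : List ℕ →₀ ℕ) :
    dConst (A • τ) = dConst τ ^ A ∧
    typeCount (A • τ) = A * typeCount τ ∧
    thetaCount A n τ * nuCount τ j =
      A ^ (typeCount τ / j) * thetaCount 1 n (A • τ) * nuCount (A • τ) (A * j) := by
  refine ⟨dConst_smul A τ, typeCount_smul A τ, ?_⟩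
  have hsupp : (A • τ).support = τ.support := Finsupp.support_smul_eq hA.ne'
  have hnuA : nuCount (A • τ) (A * j) = ∏ l ∈ τ.support, uniformPermCount (A * τ l) (A * j) := by
    rw [nuCount_eq_prod, hsupp]
    rfl
  rw [thetaCount_eq_card, card_isBlockSystem hA, ← thetaCount_eq_card, nuCount_eq_prod, hnuA,
    mul_assoc, ← Finset.prod_mul_distrib,
    Finset.prod_congr rfl fun l _ => factorial_div_mul_uniformPermCount hA hj (τ l),
    Finset.prod_mul_distrib, Finset.prod_pow_eq_pow_sum]
  -- `#τ / j = Σ τ(λ) / j` needs `j ∣ τ(λ)` for all `λ`; otherwise both sides vanish.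
  by_cases hdvd : ∀ l ∈ τ.support, j ∣ τ l
  · rw [typeCount, Finsupp.sum, Nat.sum_div hdvd]
    ring
  · obtain ⟨l, hl, hjl⟩ := not_forall₂.mp hdvd
    rw [Finset.prod_eq_zero hl (uniformPermCount_eq_zero (Nat.mul_pos hA hj)
      fun h => hjl (Nat.dvd_of_mul_dvd_mul_left hA h))]
    simp only [mul_zero]

/-- Combinatorics of types under `τ ↦ A·τ`: (i) `d_{A·τ} = d_τ^A`;
(ii) `#(A·τ) = A·#τ`; (iii) `ϑ(τ,n)·ν(τ,j) = A^{#τ/j}·ϑ(A·τ,n)·ν(A·τ,A·j)`. -/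
theorem type_rescaling_identities (A n j : ℕ) (hA : 0 < A) (hj : 0 < j)
    (τ : List ℕ →₀ ℕ)
    (hpart : ∀ l ∈ τ.support, IsPartitionList l)
    (hsize : A * typeSize τ = n)
    (hjdvd : j ∣ n / A) :
    dConst (A • τ) = dConst τ ^ A ∧
    typeCount (A • τ) = A * typeCount τ ∧
    thetaCount A n τ * nuCount τ j =
      A ^ (typeCount τ / j) * thetaCount 1 n (A • τ) * nuCount (A • τ) (A * j) :=
  type_rescaling_identities_general A n j hA hj τ
end
end

section
/- Let τ range over multi-partition types of size n relevant to the character variety count, and for each τ let deg 𝓗_{τ'} be the degree of the normalized hook polynomial. Then the quantity −n/2 + (1/2)Σ_{λ∈τ} m_λ Σᵢ λᵢ(λᵢ+1) is uniquely maximized over all types τ of size n by the type τ₀ consisting of the single partition (n) with multiplicity 1 (equivalently, the dual statement: among types of total size n, Σ_{λ∈τ} m_λ(−½⟨λ,λ⟩ + Σ_{□∈λ} h(□)) is maximal exactly when τ = {(n)}). -/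
/-! The function `g x = x * (x + 1)` is superadditive on `ℕ`, with
`g (a + b) = g a + g b + 2 * a * b`, and `m * g k ≤ g (m * k)`. Hence
`Σ_λ m_λ Σᵢ g λᵢ ≤ Σ_λ m_λ g |λ| ≤ Σ_λ g (m_λ |λ|) ≤ g n`. All three inequalities are equalities
only if there is a single partition, of multiplicity `1`, with a single part. -/

noncomputable section

theorem Nat.add_mul_add_succ (a b : ℕ) :
    (a + b) * (a + b + 1) = a * (a + 1) + b * (b + 1) + 2 * (a * b) := by
  ring

namespace Multiset

theorem sum_map_mul_succ_le (s : Multiset ℕ) :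
    (s.map fun x => x * (x + 1)).sum ≤ s.sum * (s.sum + 1) := by
  induction s using Multiset.induction_on with
  | empty => simp
  | cons a s ih =>
    rw [map_cons, sum_cons, sum_cons, Nat.add_mul_add_succ]
    omega

theorem card_le_one_of_sum_map_mul_succ_eq {s : Multiset ℕ} (hpos : ∀ x ∈ s, 0 < x)
    (h : (s.map fun x => x * (x + 1)).sum = s.sum * (s.sum + 1)) : card s ≤ 1 := by
  induction s using Multiset.induction_on with
  | empty => simp
  | cons a s _ =>
    rw [map_cons, sum_cons, sum_cons, Nat.add_mul_add_succ] at h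
    have ha : 0 < a := hpos a (mem_cons_self a s)
    have hsum : s.sum = 0 := by
      have : a * s.sum = 0 := by
        have := sum_map_mul_succ_le s
        omega
      exact (Nat.mul_eq_zero.mp this).resolve_left ha.ne'
    have hs : s = 0 := by
      rw [eq_zero_iff_forall_notMem]
      intro x hx
      exact (hpos x (mem_cons_of_mem hx)).ne' (sum_eq_zero_iff.mp hsum x hx)
    simp [hs]

end Multiset

namespace Finset

variable {ι : Type*}

theorem sum_mul_succ_le (s : Finset ι) (f : ι → ℕ) :
    ∑ i ∈ s, f i * (f i + 1) ≤ (∑ i ∈ s, f i) * (∑ i ∈ s, f i + 1) := by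
  simpa only [sum_eq_multiset_sum, Multiset.map_map, Function.comp_def] using
    Multiset.sum_map_mul_succ_le (s.val.map f)

theorem card_le_one_of_sum_mul_succ_eq {s : Finset ι} {f : ι → ℕ} (hpos : ∀ i ∈ s, 0 < f i)
    (h : ∑ i ∈ s, f i * (f i + 1) = (∑ i ∈ s, f i) * (∑ i ∈ s, f i + 1)) : #s ≤ 1 := by
  have hpos' : ∀ x ∈ s.val.map f, 0 < x := by
    simpa only [Multiset.mem_map, forall_exists_index, and_imp, forall_apply_eq_imp_iff₂]
  simpa using Multiset.card_le_one_of_sum_map_mul_succ_eq hpos'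
    (by simpa only [sum_eq_multiset_sum, Multiset.map_map, Function.comp_def] using h)

end Finset

namespace List

theorem sum_map_mul_succ_le (l : List ℕ) :
    (l.map fun x => x * (x + 1)).sum ≤ l.sum * (l.sum + 1) := by
  simpa using Multiset.sum_map_mul_succ_le l

theorem length_le_one_of_sum_map_mul_succ_eq {l : List ℕ} (hpos : ∀ x ∈ l, 0 < x)
    (h : (l.map fun x => x * (x + 1)).sum = l.sum * (l.sum + 1)) : l.length ≤ 1 := by
  simpa using Multiset.card_le_one_of_sum_map_mul_succ_eq (s := l) hpos (by simpa using h)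

end List

theorem Nat.mul_mul_mul_succ_le (m k : ℕ) : m * (k * (k + 1)) ≤ m * k * (m * k + 1) := by
  nlinarith [Nat.mul_le_mul_right (k * k) (Nat.le_mul_self m)]

theorem Nat.eq_one_of_mul_mul_mul_succ_eq {m k : ℕ} (hm : 0 < m) (hk : 0 < k)
    (h : m * (k * (k + 1)) = m * k * (m * k + 1)) : m = 1 := by
  have : m * (k * k) * m = m * (k * k) * 1 := by linarith
  exact Nat.eq_of_mul_eq_mul_left (Nat.mul_pos hm (Nat.mul_pos hk hk)) this

namespace Finsupp

variable {ι : Type*} {τ : ι →₀ ℕ} {w s : ι → ℕ}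

theorem sum_mul_le_mul_succ (hw : ∀ i ∈ τ.support, w i ≤ s i * (s i + 1)) :
    (τ.sum fun i m => m * w i) ≤
      (τ.sum fun i m => m * s i) * ((τ.sum fun i m => m * s i) + 1) :=
  calc ∑ i ∈ τ.support, τ i * w i
      ≤ ∑ i ∈ τ.support, τ i * (s i * (s i + 1)) :=
        Finset.sum_le_sum fun i hi => Nat.mul_le_mul_left _ (hw i hi)
    _ ≤ ∑ i ∈ τ.support, τ i * s i * (τ i * s i + 1) :=
        Finset.sum_le_sum fun _ _ => Nat.mul_mul_mul_succ_le _ _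
    _ ≤ _ := Finset.sum_mul_succ_le _ _

theorem eq_single_one_of_sum_mul_eq_mul_succ (hw : ∀ i ∈ τ.support, w i ≤ s i * (s i + 1))
    (hs : ∀ i ∈ τ.support, 0 < s i)
    (h : (τ.sum fun i m => m * w i) =
      (τ.sum fun i m => m * s i) * ((τ.sum fun i m => m * s i) + 1)) :
    τ = 0 ∨ ∃ i, τ = single i 1 ∧ w i = s i * (s i + 1) := by
  have h : ∑ i ∈ τ.support, τ i * w i =
      (∑ i ∈ τ.support, τ i * s i) * (∑ i ∈ τ.support, τ i * s i + 1) := h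
  have h₁ : ∀ i ∈ τ.support, τ i * w i ≤ τ i * (s i * (s i + 1)) :=
    fun i hi => Nat.mul_le_mul_left _ (hw i hi)
  have h₂ : ∀ i ∈ τ.support, τ i * (s i * (s i + 1)) ≤ τ i * s i * (τ i * s i + 1) :=
    fun _ _ => Nat.mul_mul_mul_succ_le _ _
  have h₃ := Finset.sum_mul_succ_le τ.support fun i => τ i * s i
  have s₁ := Finset.sum_le_sum h₁
  have s₂ := Finset.sum_le_sum h₂
  have e₁ := (Finset.sum_eq_sum_iff_of_le h₁).mp (by omega)
  have e₂ := (Finset.sum_eq_sum_iff_of_le h₂).mp (by omega)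
  have hτ : ∀ i ∈ τ.support, τ i = 1 := fun i hi =>
    Nat.eq_one_of_mul_mul_mul_succ_eq (Nat.pos_of_ne_zero (mem_support_iff.mp hi)) (hs i hi)
      (e₂ i hi)
  have hcard : τ.support.card ≤ 1 :=
    Finset.card_le_one_of_sum_mul_succ_eq
      (fun i hi => Nat.mul_pos (Nat.pos_of_ne_zero (mem_support_iff.mp hi)) (hs i hi))
      (by omega)
  rcases Nat.le_one_iff_eq_zero_or_eq_one.mp hcard with hcard | hcard
  · exact .inl (support_eq_empty.mp (Finset.card_eq_zero.mp hcard))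
  · obtain ⟨i, hi⟩ := Finset.card_eq_one.mp hcard
    have hmem : i ∈ τ.support := hi ▸ Finset.mem_singleton_self i
    refine .inr ⟨i, ?_, ?_⟩
    · rw [(support_eq_singleton.mp hi).2, hτ i hmem]
    · simpa [hτ i hmem] using e₁ i hmem

end Finsupp

theorem IsPartitionList.eq_singleton_of_sum_map_mul_succ_eq {l : List ℕ} (hl : IsPartitionList l)
    (h : (l.map fun x => x * (x + 1)).sum = l.sum * (l.sum + 1)) : l = [l.sum] := by
  obtain ⟨hne, -, hpos⟩ := hl
  obtain ⟨a, rfl⟩ := List.length_eq_one_iff.mp <|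
    (List.length_le_one_of_sum_map_mul_succ_eq hpos h).antisymm (List.length_pos_iff.mpr hne)
  simp

/-- Among multi-partition types `τ` of total size `n`, the quantity
`Σ_{λ∈τ} m_λ Σᵢ λᵢ(λᵢ+1)` (twice the normalized degree `deg 𝓗_{τ'}` plus `n`) is at most
`n(n+1)` and is maximal exactly for the type consisting of the single partition `(n)` with
multiplicity `1`. -/
theorem degree_maximized_by_single_row (n : ℕ) (hn : 0 < n) (τ : List ℕ →₀ ℕ)
    (hpart : ∀ l ∈ τ.support, IsPartitionList l)
    (hsize : (τ.sum fun l m => m * l.sum) = n) :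
    (τ.sum fun l m => m * (l.map fun x => x * (x + 1)).sum) ≤ n * (n + 1) ∧
    ((τ.sum fun l m => m * (l.map fun x => x * (x + 1)).sum) = n * (n + 1) ↔
      τ = Finsupp.single [n] 1) := by
  have hw : ∀ l ∈ τ.support, (l.map fun x => x * (x + 1)).sum ≤ l.sum * (l.sum + 1) :=
    fun l _ => l.sum_map_mul_succ_le
  have hs : ∀ l ∈ τ.support, 0 < l.sum := fun l hl =>
    l.sum_pos (hpart l hl).2.2 (hpart l hl).1
  refine ⟨hsize ▸ Finsupp.sum_mul_le_mul_succ hw, ⟨fun h => ?_, ?_⟩⟩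
  · rcases Finsupp.eq_single_one_of_sum_mul_eq_mul_succ hw hs (hsize ▸ h) with rfl | ⟨l, rfl, hl⟩
    · simp at hsize
      omega
    · rw [Finsupp.sum_single_index (by simp), one_mul] at hsize
      rw [(hpart l (by simp)).eq_singleton_of_sum_map_mul_succ_eq hl, hsize]
  · rintro rfl
    simp
end
end
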